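/- arXiv:2307.14281 — 3 statements merged into one kernel-verified Lean document; each statement's English description precedes it below -/
import Mathlib

section
/- For every positive integer ℓ, the expected value of the autocorrelation demerit factor ADF(f), as f ranges uniformly over the 2^ℓ binary sequences of length ℓ, equals 1 − 1/ℓ. -/
open scoped BigOperators

/-- The binary sequence of length `ℓ` determined by the sign pattern `σ`:
it takes values `±1` on `{0, …, ℓ-1}` and `0` elsewhere. -/
noncomputable def seq (ℓ : ℕ) (σ : Fin ℓ → Bool) : ℤ → ℝ := fun j =>
  if h : 0 ≤ j ∧ j < (ℓ : ℤ) then (if σ ⟨j.toNat, by omega⟩ then 1 else -1) else 0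

/-- Aperiodic autocorrelation of `f` at shift `s`. -/
noncomputable def autocorr (f : ℤ → ℝ) (s : ℤ) : ℝ := ∑ᶠ j : ℤ, f (j + s) * f j

/-- Sum of squares of all autocorrelation values. -/
noncomputable def ssac (f : ℤ → ℝ) : ℝ := ∑ᶠ s : ℤ, autocorr f s ^ 2

/-- Expected value of `v(f)` as `f` ranges uniformly over the `2^ℓ` binary
sequences of length `ℓ`. -/
noncomputable def expect (ℓ : ℕ) (v : (ℤ → ℝ) → ℝ) : ℝ :=
  (∑ σ : Fin ℓ → Bool, v (seq ℓ σ)) / 2 ^ ℓ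

/-- The `p`-th central moment of `v(f)` over binary sequences of length `ℓ`. -/
noncomputable def cmom (p ℓ : ℕ) (v : (ℤ → ℝ) → ℝ) : ℝ :=
  expect ℓ fun f => (v f - expect ℓ v) ^ p

/-- The autocorrelation demerit factor of a binary sequence of length `ℓ`. -/
noncomputable def ADF (ℓ : ℕ) (f : ℤ → ℝ) : ℝ := -1 + ssac f / (ℓ : ℝ) ^ 2

section Aux

variable {ℓ : ℕ}

lemma seq_eq_zero {σ : Fin ℓ → Bool} {j : ℤ} (h : ¬(0 ≤ j ∧ j < (ℓ : ℤ))) :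
    seq ℓ σ j = 0 := by
  simp [seq, h]

lemma seq_sq (σ : Fin ℓ → Bool) (j : ℤ) :
    seq ℓ σ j * seq ℓ σ j = if 0 ≤ j ∧ j < (ℓ : ℤ) then 1 else 0 := by
  unfold seq
  split
  · split <;> norm_num
  · norm_num

lemma autocorr_seq (σ : Fin ℓ → Bool) (s : ℤ) :
    autocorr (seq ℓ σ) s
      = ∑ j ∈ Finset.Ico (0 : ℤ) (ℓ : ℤ), seq ℓ σ (j + s) * seq ℓ σ j := by
  apply finsum_eq_finset_sum_of_support_subset
  intro j hj
  simp only [Function.mem_support] at hj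
  simp only [Finset.coe_Ico, Set.mem_Ico]
  by_contra h
  exact hj (by rw [seq_eq_zero (j := j) h, mul_zero])

lemma autocorr_seq_zero (σ : Fin ℓ → Bool) {s : ℤ}
    (hs : ¬(-(ℓ : ℤ) < s ∧ s < (ℓ : ℤ))) : autocorr (seq ℓ σ) s = 0 := by
  rw [autocorr_seq]
  apply Finset.sum_eq_zero
  intro j hj
  rw [Finset.mem_Ico] at hj
  rw [seq_eq_zero (j := j + s) (by omega), zero_mul]

lemma ssac_seq (σ : Fin ℓ → Bool) :
    ssac (seq ℓ σ)
      = ∑ s ∈ Finset.Ioo (-(ℓ : ℤ)) (ℓ : ℤ), autocorr (seq ℓ σ) s ^ 2 := by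
  apply finsum_eq_finset_sum_of_support_subset
  intro s hs
  simp only [Function.mem_support] at hs
  simp only [Finset.coe_Ioo, Set.mem_Ioo]
  by_contra h
  exact hs (by rw [autocorr_seq_zero σ h]; ring)

/-- Flip the sign at integer position `i` (no-op when out of range). -/
noncomputable def flipZ (σ : Fin ℓ → Bool) (i : ℤ) : Fin ℓ → Bool :=
  if h : 0 ≤ i ∧ i < (ℓ : ℤ) then
    Function.update σ ⟨i.toNat, by omega⟩ (!σ ⟨i.toNat, by omega⟩)
  else σ

lemma flipZ_flipZ (σ : Fin ℓ → Bool) (i : ℤ) : flipZ (flipZ σ i) i = σ := by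
  unfold flipZ
  split
  · funext j
    rcases eq_or_ne j (⟨i.toNat, by omega⟩ : Fin ℓ) with h | h
    · subst h; simp
    · simp [Function.update_of_ne h]
  · rfl

lemma seq_flipZ (σ : Fin ℓ → Bool) {i : ℤ} (hi : 0 ≤ i ∧ i < (ℓ : ℤ)) (j : ℤ) :
    seq ℓ (flipZ σ i) j = if j = i then -seq ℓ σ j else seq ℓ σ j := by
  unfold flipZ
  rw [dif_pos hi]
  unfold seq
  by_cases hj : 0 ≤ j ∧ j < (ℓ : ℤ)
  · rw [dif_pos hj, dif_pos hj]
    by_cases he : j = i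
    · rw [if_pos he]
      have hfin : (⟨j.toNat, by omega⟩ : Fin ℓ) = (⟨i.toNat, by omega⟩ : Fin ℓ) := by
        apply Fin.ext; simp; omega
      rw [hfin, Function.update_self]
      cases σ (⟨i.toNat, by omega⟩ : Fin ℓ) <;> norm_num
    · rw [if_neg he]
      have hfin : (⟨j.toNat, by omega⟩ : Fin ℓ) ≠ (⟨i.toNat, by omega⟩ : Fin ℓ) := by
        intro hc
        have := congrArg Fin.val hc
        simp at this
        omega
      rw [Function.update_of_ne hfin]
  · rw [dif_neg hj, dif_neg hj]
    split <;> norm_num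

lemma sum_flipZ_zero {i : ℤ} (hi : 0 ≤ i ∧ i < (ℓ : ℤ)) (P : (Fin ℓ → Bool) → ℝ)
    (h : ∀ σ, P (flipZ σ i) = -P σ) :
    ∑ σ : Fin ℓ → Bool, P σ = 0 := by
  have hinv : Function.Involutive (fun σ : Fin ℓ → Bool => flipZ σ i) :=
    fun σ => flipZ_flipZ σ i
  have h1 : ∑ σ : Fin ℓ → Bool, P (flipZ σ i) = ∑ σ : Fin ℓ → Bool, P σ :=
    Equiv.sum_comp hinv.toPerm P
  have h2 : ∑ σ : Fin ℓ → Bool, P (flipZ σ i) = -∑ σ : Fin ℓ → Bool, P σ := by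
    simp_rw [h]
    exact Finset.sum_neg_distrib (f := P)
  linarith

lemma sum_prod_eq_zero {s j k : ℤ} (hs : s ≠ 0) (hjk : j ≠ k)
    (hj : 0 ≤ j ∧ j < (ℓ : ℤ)) (hk : 0 ≤ k ∧ k < (ℓ : ℤ)) :
    ∑ σ : Fin ℓ → Bool,
      seq ℓ σ (j + s) * seq ℓ σ j * (seq ℓ σ (k + s) * seq ℓ σ k) = 0 := by
  by_cases hjs : 0 ≤ j + s ∧ j + s < (ℓ : ℤ)
  · by_cases hks : 0 ≤ k + s ∧ k + s < (ℓ : ℤ)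
    · by_cases hcase : j + s = k
      · -- flip at k + s, which is distinct from the other three indices
        refine sum_flipZ_zero hks _ ?_
        intro σ
        rw [seq_flipZ σ hks (j + s), seq_flipZ σ hks j, seq_flipZ σ hks (k + s),
          seq_flipZ σ hks k]
        rw [if_neg (by omega), if_neg (by omega), if_pos rfl, if_neg (by omega)]
        ring
      · -- flip at j + s, which is distinct from the other three indices
        refine sum_flipZ_zero hjs _ ?_
        intro σ
        rw [seq_flipZ σ hjs (j + s), seq_flipZ σ hjs j, seq_flipZ σ hjs (k + s),
          seq_flipZ σ hjs k]
        rw [if_pos rfl, if_neg (by omega), if_neg (by omega), if_neg (by omega)]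
        ring
    · apply Finset.sum_eq_zero
      intro σ _
      rw [seq_eq_zero (j := k + s) hks]
      ring
  · apply Finset.sum_eq_zero
    intro σ _
    rw [seq_eq_zero (j := j + s) hjs]
    ring

lemma card_fun_bool : (Fintype.card (Fin ℓ → Bool) : ℝ) = 2 ^ ℓ := by
  simp [Fintype.card_fun]

lemma sum_sq_autocorr_ne (s : ℤ) (hs : s ≠ 0) :
    ∑ σ : Fin ℓ → Bool, autocorr (seq ℓ σ) s ^ 2
      = 2 ^ ℓ * ∑ j ∈ Finset.Ico (0 : ℤ) (ℓ : ℤ),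
          (if 0 ≤ j + s ∧ j + s < (ℓ : ℤ) then (1 : ℝ) else 0) := by
  have key : ∀ j ∈ Finset.Ico (0 : ℤ) (ℓ : ℤ), ∀ k ∈ Finset.Ico (0 : ℤ) (ℓ : ℤ),
      ∑ σ : Fin ℓ → Bool,
        seq ℓ σ (j + s) * seq ℓ σ j * (seq ℓ σ (k + s) * seq ℓ σ k)
      = if k = j then (if 0 ≤ j + s ∧ j + s < (ℓ : ℤ) then (2:ℝ) ^ ℓ else 0) else 0 := by
    intro j hj k hk
    rw [Finset.mem_Ico] at hj hk
    rcases eq_or_ne k j with rfl | hne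
    · rw [if_pos rfl]
      have hterm : ∀ σ : Fin ℓ → Bool,
          seq ℓ σ (k + s) * seq ℓ σ k * (seq ℓ σ (k + s) * seq ℓ σ k)
          = if 0 ≤ k + s ∧ k + s < (ℓ : ℤ) then (1:ℝ) else 0 := by
        intro σ
        have h1 := seq_sq σ (k + s)
        have h2 := seq_sq σ k
        rw [if_pos (by omega)] at h2
        calc seq ℓ σ (k + s) * seq ℓ σ k * (seq ℓ σ (k + s) * seq ℓ σ k)
            = (seq ℓ σ (k + s) * seq ℓ σ (k + s)) * (seq ℓ σ k * seq ℓ σ k) := by ring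
          _ = if 0 ≤ k + s ∧ k + s < (ℓ : ℤ) then (1:ℝ) else 0 := by
              rw [h1, h2, mul_one]
      simp_rw [hterm]
      rw [Finset.sum_const, Finset.card_univ]
      split <;> simp [Fintype.card_fun]
    · rw [if_neg hne]
      exact sum_prod_eq_zero hs (Ne.symm hne) (by omega) (by omega)
  calc ∑ σ : Fin ℓ → Bool, autocorr (seq ℓ σ) s ^ 2
      = ∑ σ : Fin ℓ → Bool, ∑ j ∈ Finset.Ico (0 : ℤ) (ℓ : ℤ),
          ∑ k ∈ Finset.Ico (0 : ℤ) (ℓ : ℤ),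
            seq ℓ σ (j + s) * seq ℓ σ j * (seq ℓ σ (k + s) * seq ℓ σ k) := by
        refine Finset.sum_congr rfl fun σ _ => ?_
        rw [autocorr_seq, sq, Finset.sum_mul_sum]
    _ = ∑ j ∈ Finset.Ico (0 : ℤ) (ℓ : ℤ), ∑ k ∈ Finset.Ico (0 : ℤ) (ℓ : ℤ),
          ∑ σ : Fin ℓ → Bool,
            seq ℓ σ (j + s) * seq ℓ σ j * (seq ℓ σ (k + s) * seq ℓ σ k) := by
        rw [Finset.sum_comm]
        exact Finset.sum_congr rfl fun j _ => Finset.sum_comm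
    _ = ∑ j ∈ Finset.Ico (0 : ℤ) (ℓ : ℤ),
          (if 0 ≤ j + s ∧ j + s < (ℓ : ℤ) then (2:ℝ) ^ ℓ else 0) := by
        refine Finset.sum_congr rfl fun j hj => ?_
        rw [Finset.sum_congr rfl (fun k hk => key j hj k hk),
          Finset.sum_ite_eq' (Finset.Ico (0 : ℤ) (ℓ : ℤ)), if_pos hj]
    _ = 2 ^ ℓ * ∑ j ∈ Finset.Ico (0 : ℤ) (ℓ : ℤ),
          (if 0 ≤ j + s ∧ j + s < (ℓ : ℤ) then (1 : ℝ) else 0) := by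
        rw [Finset.mul_sum]
        refine Finset.sum_congr rfl fun j _ => ?_
        split <;> ring

lemma autocorr_at_zero (σ : Fin ℓ → Bool) : autocorr (seq ℓ σ) 0 = (ℓ : ℝ) := by
  rw [autocorr_seq]
  have : ∀ j ∈ Finset.Ico (0 : ℤ) (ℓ : ℤ), seq ℓ σ (j + 0) * seq ℓ σ j = 1 := by
    intro j hj
    rw [Finset.mem_Ico] at hj
    rw [add_zero, seq_sq, if_pos (by omega)]
  rw [Finset.sum_congr rfl this, Finset.sum_const, Int.card_Ico]
  simp

lemma indicator_sum :
    ∑ s ∈ Finset.Ioo (-(ℓ : ℤ)) (ℓ : ℤ), ∑ j ∈ Finset.Ico (0 : ℤ) (ℓ : ℤ),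
        (if 0 ≤ j + s ∧ j + s < (ℓ : ℤ) then (1 : ℝ) else 0) = (ℓ : ℝ) ^ 2 := by
  rw [Finset.sum_comm]
  have key : ∀ j ∈ Finset.Ico (0 : ℤ) (ℓ : ℤ),
      ∑ s ∈ Finset.Ioo (-(ℓ : ℤ)) (ℓ : ℤ),
        (if 0 ≤ j + s ∧ j + s < (ℓ : ℤ) then (1 : ℝ) else 0) = (ℓ : ℝ) := by
    intro j hj
    rw [Finset.mem_Ico] at hj
    have hsub : Finset.Ico (-j) ((ℓ : ℤ) - j) ⊆ Finset.Ioo (-(ℓ : ℤ)) (ℓ : ℤ) := by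
      intro s hsmem
      rw [Finset.mem_Ico] at hsmem
      rw [Finset.mem_Ioo]
      omega
    rw [← Finset.sum_subset hsub (fun s hs1 hs2 => by
      rw [Finset.mem_Ioo] at hs1
      rw [Finset.mem_Ico] at hs2
      rw [if_neg (by omega)])]
    have : ∀ s ∈ Finset.Ico (-j) ((ℓ : ℤ) - j),
        (if 0 ≤ j + s ∧ j + s < (ℓ : ℤ) then (1 : ℝ) else 0) = 1 := by
      intro s hsmem
      rw [Finset.mem_Ico] at hsmem
      rw [if_pos (by omega)]
    rw [Finset.sum_congr rfl this, Finset.sum_const, Int.card_Ico]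
    have : ((ℓ : ℤ) - j - -j).toNat = ℓ := by omega
    rw [this]
    simp
  rw [Finset.sum_congr rfl key, Finset.sum_const, Int.card_Ico]
  have : ((ℓ : ℤ) - 0).toNat = ℓ := by omega
  rw [this]
  simp [sq]

lemma sum_ssac (hℓ : 0 < ℓ) :
    ∑ σ : Fin ℓ → Bool, ssac (seq ℓ σ)
      = 2 ^ ℓ * (2 * (ℓ : ℝ) ^ 2 - (ℓ : ℝ)) := by
  have h0 : (0 : ℤ) ∈ Finset.Ioo (-(ℓ : ℤ)) (ℓ : ℤ) := by
    rw [Finset.mem_Ioo]; omega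
  have N0 : ∑ j ∈ Finset.Ico (0 : ℤ) (ℓ : ℤ),
      (if 0 ≤ j + (0:ℤ) ∧ j + (0:ℤ) < (ℓ : ℤ) then (1 : ℝ) else 0) = (ℓ : ℝ) := by
    have : ∀ j ∈ Finset.Ico (0 : ℤ) (ℓ : ℤ),
        (if 0 ≤ j + (0:ℤ) ∧ j + (0:ℤ) < (ℓ : ℤ) then (1 : ℝ) else 0) = 1 := by
      intro j hj
      rw [Finset.mem_Ico] at hj
      rw [if_pos (by omega)]
    rw [Finset.sum_congr rfl this, Finset.sum_const, Int.card_Ico]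
    have : ((ℓ : ℤ) - 0).toNat = ℓ := by omega
    rw [this]; simp
  calc ∑ σ : Fin ℓ → Bool, ssac (seq ℓ σ)
      = ∑ s ∈ Finset.Ioo (-(ℓ : ℤ)) (ℓ : ℤ),
          ∑ σ : Fin ℓ → Bool, autocorr (seq ℓ σ) s ^ 2 := by
        rw [← Finset.sum_comm]
        exact Finset.sum_congr rfl fun σ _ => ssac_seq σ
    _ = (∑ σ : Fin ℓ → Bool, autocorr (seq ℓ σ) (0:ℤ) ^ 2)
        + ∑ s ∈ (Finset.Ioo (-(ℓ : ℤ)) (ℓ : ℤ)).erase 0,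
            ∑ σ : Fin ℓ → Bool, autocorr (seq ℓ σ) s ^ 2 := by
        exact (Finset.add_sum_erase _ _ h0).symm
    _ = 2 ^ ℓ * (ℓ : ℝ) ^ 2
        + ∑ s ∈ (Finset.Ioo (-(ℓ : ℤ)) (ℓ : ℤ)).erase 0,
            2 ^ ℓ * ∑ j ∈ Finset.Ico (0 : ℤ) (ℓ : ℤ),
              (if 0 ≤ j + s ∧ j + s < (ℓ : ℤ) then (1 : ℝ) else 0) := by
        congr 1
        · simp_rw [autocorr_at_zero]
          rw [Finset.sum_const, Finset.card_univ]
          simp [Fintype.card_fun]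
        · refine Finset.sum_congr rfl fun s hsmem => ?_
          exact sum_sq_autocorr_ne s (Finset.ne_of_mem_erase hsmem)
    _ = 2 ^ ℓ * (2 * (ℓ : ℝ) ^ 2 - (ℓ : ℝ)) := by
        rw [← Finset.mul_sum]
        have herase : ∑ s ∈ (Finset.Ioo (-(ℓ : ℤ)) (ℓ : ℤ)).erase 0,
            ∑ j ∈ Finset.Ico (0 : ℤ) (ℓ : ℤ),
              (if 0 ≤ j + s ∧ j + s < (ℓ : ℤ) then (1 : ℝ) else 0)
            = (ℓ : ℝ) ^ 2 - (ℓ : ℝ) := by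
          have := indicator_sum (ℓ := ℓ)
          rw [← Finset.add_sum_erase _ _ h0] at this
          rw [N0] at this
          linarith
        rw [herase]
        ring

end Aux

/-- Sarwate: the mean of the demerit factor of binary sequences of length `ℓ`
is `1 - 1/ℓ`. -/
theorem mean_ADF (ℓ : ℕ) (hℓ : 0 < ℓ) : expect ℓ (ADF ℓ) = 1 - 1 / (ℓ : ℝ) := by
  have hsum := sum_ssac (ℓ := ℓ) hℓ
  have hℓR : (0:ℝ) < (ℓ : ℝ) := by exact_mod_cast hℓ
  unfold expect ADF
  rw [Finset.sum_add_distrib, Finset.sum_const, Finset.card_univ]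
  rw [← Finset.sum_div, hsum]
  have h2 : (0:ℝ) < 2 ^ ℓ := by positivity
  rw [Fintype.card_fun]
  simp only [Fintype.card_bool, Fintype.card_fin, Nat.cast_pow, Nat.cast_ofNat]
  field_simp
  ring
end

section
/- For every positive integer ℓ, the variance (second central moment) of ssac(f), as f ranges uniformly over the 2^ℓ binary sequences of length ℓ, equals (16ℓ³ − 60ℓ² + 56ℓ)/3 if ℓ is even, and (16ℓ³ − 60ℓ² + 56ℓ − 12)/3 if ℓ is odd. -/
open scoped BigOperators

open Finset
open scoped Classical

def cnt (x y : ℕ) : ℕ := if y = x then 1 else 0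



lemma cnt_spec (x y : ℕ) : (x = y ∧ cnt x y = 1) ∨ (x ≠ y ∧ cnt x y = 0) := by
  unfold cnt; split_ifs with h <;> simp [h] <;> omega

lemma even4_pairing (a b c d : ℕ)
    (H : ∀ x : ℕ, (cnt x a + cnt x b + cnt x c + cnt x d) % 2 = 0) :
    (a = b ∧ c = d) ∨ (a = c ∧ b = d) ∨ (a = d ∧ b = c) := by
  have ha := H a; have hb := H b; have hc := H c; have hd := H d
  have s1 := cnt_spec a a; have s2 := cnt_spec a b; have s3 := cnt_spec a c; have s4 := cnt_spec a d
  have s5 := cnt_spec b a; have s6 := cnt_spec b b; have s7 := cnt_spec b c; have s8 := cnt_spec b d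
  have s9 := cnt_spec c a; have s10 := cnt_spec c b; have s11 := cnt_spec c c; have s12 := cnt_spec c d
  have s13 := cnt_spec d a; have s14 := cnt_spec d b; have s15 := cnt_spec d c; have s16 := cnt_spec d d
  omega

/-- hypothesis for the 8-element multiset with two shifts -/
def Hyp (s t j k m n : ℕ) : Prop :=
  ∀ x : ℕ, (cnt x j + cnt x (j+s) + cnt x k + cnt x (k+s)
      + cnt x m + cnt x (m+t) + cnt x n + cnt x (n+t)) % 2 = 0

lemma hyp_swap_jk (s t j k m n : ℕ) (H : Hyp s t j k m n) : Hyp s t k j m n := by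
  intro x; have := H x; omega

lemma hyp_swap_mn (s t j k m n : ℕ) (H : Hyp s t j k m n) : Hyp s t j k n m := by
  intro x; have := H x; omega

/-- core case: j < k, m < n, s ≠ t -/
lemma B8core (s t j k m n : ℕ) (hs : 1 ≤ s) (ht : 1 ≤ t) (hst : s ≠ t)
    (hjk : j < k) (hmn : m < n) (H : Hyp s t j k m n) :
    k = j + t ∧ m = j ∧ n = j + s := by
  -- step 1 : j = m
  have hjm : j = m := by
    have h1 := H j; have h2 := H m
    have s1 := cnt_spec j j; have s2 := cnt_spec j (j+s); have s3 := cnt_spec j k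
    have s4 := cnt_spec j (k+s); have s5 := cnt_spec j m; have s6 := cnt_spec j (m+t)
    have s7 := cnt_spec j n; have s8 := cnt_spec j (n+t)
    have t1 := cnt_spec m j; have t2 := cnt_spec m (j+s); have t3 := cnt_spec m k
    have t4 := cnt_spec m (k+s); have t5 := cnt_spec m m; have t6 := cnt_spec m (m+t)
    have t7 := cnt_spec m n; have t8 := cnt_spec m (n+t)
    omega
  subst hjm
  -- now H : Hyp s t j k j n, and j < k, j < n
  rcases lt_or_gt_of_ne hst with hlt | hgt
  · -- s < t : look at fiber of j+s
    have D : j + s = k ∨ j + s = n ∨ j + s = n + t := by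
      have h1 := H (j+s)
      have s1 := cnt_spec (j+s) j; have s2 := cnt_spec (j+s) (j+s); have s3 := cnt_spec (j+s) k
      have s4 := cnt_spec (j+s) (k+s); have s5 := cnt_spec (j+s) (j+t)
      have s7 := cnt_spec (j+s) n; have s8 := cnt_spec (j+s) (n+t)
      omega
    rcases D with hd | hd | hd
    · -- j + s = k : degenerate, contradiction
      exfalso
      have hk : k = j + s := hd.symm
      subst hk
      have H4 : ∀ x : ℕ, (cnt x (j+s+s) + cnt x (j+t) + cnt x n + cnt x (n+t)) % 2 = 0 := by
        intro x; have := H x; omega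
      rcases even4_pairing _ _ _ _ H4 with ⟨h1, h2⟩ | ⟨h1, h2⟩ | ⟨h1, h2⟩ <;> omega
    · -- j + s = n : then k = j + t
      have hn : n = j + s := hd.symm
      subst hn
      have H4 : ∀ x : ℕ, (cnt x k + cnt x (k+s) + cnt x (j+t) + cnt x (j+s+t)) % 2 = 0 := by
        intro x; have := H x; omega
      rcases even4_pairing _ _ _ _ H4 with ⟨h1, h2⟩ | ⟨h1, h2⟩ | ⟨h1, h2⟩ <;> omega
    · omega
  · -- t < s : look at fiber of j+t
    have D : j + t = k ∨ j + t = k + s ∨ j + t = n := by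
      have h1 := H (j+t)
      have s1 := cnt_spec (j+t) j; have s2 := cnt_spec (j+t) (j+s); have s3 := cnt_spec (j+t) k
      have s4 := cnt_spec (j+t) (k+s); have s5 := cnt_spec (j+t) (j+t)
      have s7 := cnt_spec (j+t) n; have s8 := cnt_spec (j+t) (n+t)
      omega
    rcases D with hd | hd | hd
    · have hk : k = j + t := hd.symm
      subst hk
      have H4 : ∀ x : ℕ, (cnt x (j+s) + cnt x (j+t+s) + cnt x n + cnt x (n+t)) % 2 = 0 := by
        intro x; have := H x; omega
      rcases even4_pairing _ _ _ _ H4 with ⟨h1, h2⟩ | ⟨h1, h2⟩ | ⟨h1, h2⟩ <;> omega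
    · omega
    · -- j + t = n : contradiction
      exfalso
      have hn : n = j + t := hd.symm
      subst hn
      have H4 : ∀ x : ℕ, (cnt x (j+s) + cnt x k + cnt x (k+s) + cnt x (j+t+t)) % 2 = 0 := by
        intro x; have := H x; omega
      rcases even4_pairing _ _ _ _ H4 with ⟨h1, h2⟩ | ⟨h1, h2⟩ | ⟨h1, h2⟩ <;> omega

lemma B8 (s t j k m n : ℕ) (hs : 1 ≤ s) (ht : 1 ≤ t) (hst : s ≠ t) (H : Hyp s t j k m n) :
    (j = k ∧ m = n) ∨ (k = j+t ∧ m = j ∧ n = j+s) ∨ (k = j+t ∧ m = j+s ∧ n = j)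
      ∨ (j = k+t ∧ m = k ∧ n = k+s) ∨ (j = k+t ∧ m = k+s ∧ n = k) := by
  by_cases hjk : j = k
  · subst hjk
    by_cases hmn : m = n
    · exact Or.inl ⟨rfl, hmn⟩
    · exfalso
      have H4 : ∀ x : ℕ, (cnt x m + cnt x (m+t) + cnt x n + cnt x (n+t)) % 2 = 0 := by
        intro x; have := H x; omega
      rcases even4_pairing _ _ _ _ H4 with ⟨h1, h2⟩ | ⟨h1, h2⟩ | ⟨h1, h2⟩ <;> omega
  · by_cases hmn : m = n
    · exfalso
      subst hmn
      have H4 : ∀ x : ℕ, (cnt x j + cnt x (j+s) + cnt x k + cnt x (k+s)) % 2 = 0 := by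
        intro x; have := H x; omega
      rcases even4_pairing _ _ _ _ H4 with ⟨h1, h2⟩ | ⟨h1, h2⟩ | ⟨h1, h2⟩ <;> omega
    · rcases Nat.lt_or_ge j k with h1 | h1
      · rcases Nat.lt_or_ge m n with h2 | h2
        · have := B8core s t j k m n hs ht hst h1 h2 H
          omega
        · have := B8core s t j k n m hs ht hst h1 (by omega) (hyp_swap_mn _ _ _ _ _ _ H)
          omega
      · rcases Nat.lt_or_ge m n with h2 | h2
        · have := B8core s t k j m n hs ht hst (by omega) h2 (hyp_swap_jk _ _ _ _ _ _ H)
          omega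
        · have := B8core s t k j n m hs ht hst (by omega) (by omega)
            (hyp_swap_mn _ _ _ _ _ _ (hyp_swap_jk _ _ _ _ _ _ H))
          omega

-- diagonal case, forward
lemma C8 (s j k m n : ℕ) (hs : 1 ≤ s) (H : Hyp s s j k m n) :
    (j = k ∧ m = n) ∨ (j = m ∧ k = n) ∨ (j = n ∧ k = m) := by
  by_cases hjk : j = k
  · subst hjk
    have H4 : ∀ x : ℕ, (cnt x m + cnt x (m+s) + cnt x n + cnt x (n+s)) % 2 = 0 := by
      intro x; have := H x; omega
    rcases even4_pairing _ _ _ _ H4 with ⟨h1, h2⟩ | ⟨h1, h2⟩ | ⟨h1, h2⟩ <;> omega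
  · by_cases hjm : j = m
    · subst hjm
      have H4 : ∀ x : ℕ, (cnt x k + cnt x (k+s) + cnt x n + cnt x (n+s)) % 2 = 0 := by
        intro x; have := H x; omega
      rcases even4_pairing _ _ _ _ H4 with ⟨h1, h2⟩ | ⟨h1, h2⟩ | ⟨h1, h2⟩ <;> omega
    · by_cases hjn : j = n
      · subst hjn
        have H4 : ∀ x : ℕ, (cnt x k + cnt x (k+s) + cnt x m + cnt x (m+s)) % 2 = 0 := by
          intro x; have := H x; omega
        rcases even4_pairing _ _ _ _ H4 with ⟨h1, h2⟩ | ⟨h1, h2⟩ | ⟨h1, h2⟩ <;> omega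
      · -- j differs from k, m, n : contradiction via minimum fiber
        exfalso
        have hmin : (j ≤ k ∧ j ≤ m ∧ j ≤ n) ∨ (k ≤ j ∧ k ≤ m ∧ k ≤ n)
            ∨ (m ≤ j ∧ m ≤ k ∧ m ≤ n) ∨ (n ≤ j ∧ n ≤ k ∧ n ≤ m) := by omega
        have fib : ∀ x : ℕ, x ≤ j → x ≤ k → x ≤ m → x ≤ n → x = j ∨ x = k ∨ x = m ∨ x = n →
            ((x = j ∨ x = k) ∧ (x = m ∨ x = n)) ∨ (x = j ∧ x = k) ∨ (x = m ∧ x = n) := by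
          intro x hxj hxk hxm hxn hmem
          have h1 := H x
          have s1 := cnt_spec x j; have s2 := cnt_spec x (j+s); have s3 := cnt_spec x k
          have s4 := cnt_spec x (k+s); have s5 := cnt_spec x m; have s6 := cnt_spec x (m+s)
          have s7 := cnt_spec x n; have s8 := cnt_spec x (n+s)
          omega
        -- whichever is minimal, we derive one of j=k,j=m,j=n,k=m,k=n,m=n patterns
        have key : (k = m) ∨ (k = n) ∨ (m = n) := by
          rcases hmin with ⟨h1,h2,h3⟩ | ⟨h1,h2,h3⟩ | ⟨h1,h2,h3⟩ | ⟨h1,h2,h3⟩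
          · have := fib j le_rfl h1 h2 h3 (Or.inl rfl); omega
          · have := fib k h1 le_rfl h2 h3 (Or.inr (Or.inl rfl)); omega
          · have := fib m h1 h2 le_rfl h3 (Or.inr (Or.inr (Or.inl rfl))); omega
          · have := fib n h1 h2 h3 le_rfl (Or.inr (Or.inr (Or.inr rfl))); omega
        rcases key with hkm | hkn | hmn
        · subst hkm
          have H4 : ∀ x : ℕ, (cnt x j + cnt x (j+s) + cnt x n + cnt x (n+s)) % 2 = 0 := by
            intro x; have := H x; omega
          rcases even4_pairing _ _ _ _ H4 with ⟨h1, h2⟩ | ⟨h1, h2⟩ | ⟨h1, h2⟩ <;> omega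
        · subst hkn
          have H4 : ∀ x : ℕ, (cnt x j + cnt x (j+s) + cnt x m + cnt x (m+s)) % 2 = 0 := by
            intro x; have := H x; omega
          rcases even4_pairing _ _ _ _ H4 with ⟨h1, h2⟩ | ⟨h1, h2⟩ | ⟨h1, h2⟩ <;> omega
        · subst hmn
          have H4 : ∀ x : ℕ, (cnt x j + cnt x (j+s) + cnt x k + cnt x (k+s)) % 2 = 0 := by
            intro x; have := H x; omega
          rcases even4_pairing _ _ _ _ H4 with ⟨h1, h2⟩ | ⟨h1, h2⟩ | ⟨h1, h2⟩ <;> omega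

-- converse directions
lemma hyp_of_pair1 (s t j m : ℕ) : Hyp s t j j m m := by intro x; omega
lemma hyp_of_c1 (s t j : ℕ) : Hyp s t j (j+t) j (j+s) := by
  intro x
  have e1 : j + t + s = j + s + t := by omega
  rw [e1]; omega
lemma hyp_of_c2 (s t j : ℕ) : Hyp s t j (j+t) (j+s) j := by
  intro x
  have e1 : j + t + s = j + s + t := by omega
  rw [e1]; omega
lemma hyp_of_c3 (s t k : ℕ) : Hyp s t (k+t) k k (k+s) := by
  intro x
  have e1 : k + t + s = k + s + t := by omega
  rw [e1]; omega
lemma hyp_of_c4 (s t k : ℕ) : Hyp s t (k+t) k (k+s) k := by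
  intro x
  have e1 : k + t + s = k + s + t := by omega
  rw [e1]; omega
lemma hyp_diag2 (s j k : ℕ) : Hyp s s j k j k := by intro x; omega
lemma hyp_diag3 (s j k : ℕ) : Hyp s s j k k j := by intro x; omega


def sgn (b : Bool) : ℝ := if b then 1 else -1

noncomputable def eps (ℓ : ℕ) (σ : Fin ℓ → Bool) (a : ℕ) : ℝ :=
  if h : a < ℓ then sgn (σ ⟨a, h⟩) else 0

lemma prod_eps_count (ℓ : ℕ) (σ : Fin ℓ → Bool) (L : List (Fin ℓ)) :
    (L.map fun i => sgn (σ i)).prod = ∏ x : Fin ℓ, sgn (σ x) ^ (L.count x) := by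
  induction L with
  | nil => simp
  | cons a L ih =>
      simp only [List.map_cons, List.prod_cons, ih, List.count_cons, beq_iff_eq]
      rw [Finset.prod_congr rfl (fun x _ => pow_add (sgn (σ x)) (L.count x) _),
        Finset.prod_mul_distrib]
      rw [mul_comm]
      congr 1
      have : ∀ x : Fin ℓ, sgn (σ x) ^ (if a = x then 1 else 0)
          = if a = x then sgn (σ x) else 1 := by
        intro x; by_cases h : a = x <;> simp [h]
      rw [Finset.prod_congr rfl (fun x _ => this x), Finset.prod_ite_eq Finset.univ a
        (fun x => sgn (σ x))]
      simp

lemma sum_sgn_pow (m : ℕ) : ∑ b : Bool, sgn b ^ m = if Even m then 2 else 0 := by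
  rcases Nat.even_or_odd m with h | h
  · simp [Fintype.sum_bool, sgn, h.neg_one_pow, if_pos h]
  · simp [Fintype.sum_bool, sgn, h.neg_one_pow, if_neg (Nat.not_even_iff_odd.2 h)]

lemma sum_prod_sgn (ℓ : ℕ) (L : List (Fin ℓ)) :
    ∑ σ : Fin ℓ → Bool, (L.map fun i => sgn (σ i)).prod
      = if (∀ x : Fin ℓ, Even (L.count x)) then (2:ℝ)^ℓ else 0 := by
  have e1 : ∀ σ : Fin ℓ → Bool, (L.map fun i => sgn (σ i)).prod
      = ∏ x : Fin ℓ, sgn (σ x) ^ (L.count x) := fun σ => prod_eps_count ℓ σ L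
  rw [Finset.sum_congr rfl (fun σ _ => e1 σ), ← Fintype.prod_sum (fun x b => sgn b ^ (L.count x))]
  by_cases h : ∀ x : Fin ℓ, Even (L.count x)
  · rw [if_pos h]
    rw [Finset.prod_congr rfl (fun x _ => by rw [sum_sgn_pow, if_pos (h x)])]
    simp
  · rw [if_neg h]
    push_neg at h
    obtain ⟨x, hx⟩ := h
    exact Finset.prod_eq_zero (Finset.mem_univ x) (by rw [sum_sgn_pow, if_neg hx])

lemma key8 (ℓ a b c d p q r w : ℕ) (ha : a < ℓ) (hb : b < ℓ) (hc : c < ℓ) (hd : d < ℓ)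
    (hp : p < ℓ) (hq : q < ℓ) (hr : r < ℓ) (hw : w < ℓ) :
    ∑ σ : Fin ℓ → Bool, eps ℓ σ a * eps ℓ σ b * eps ℓ σ c * eps ℓ σ d
        * eps ℓ σ p * eps ℓ σ q * eps ℓ σ r * eps ℓ σ w
      = if (∀ x : ℕ, (cnt x a + cnt x b + cnt x c + cnt x d
          + cnt x p + cnt x q + cnt x r + cnt x w) % 2 = 0) then (2:ℝ)^ℓ else 0 := by
  set L : List (Fin ℓ) := [⟨a,ha⟩, ⟨b,hb⟩, ⟨c,hc⟩, ⟨d,hd⟩, ⟨p,hp⟩, ⟨q,hq⟩, ⟨r,hr⟩, ⟨w,hw⟩] with hL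
  have hcount : ∀ (x : ℕ) (h : x < ℓ), L.count ⟨x,h⟩
      = cnt x a + cnt x b + cnt x c + cnt x d + cnt x p + cnt x q + cnt x r + cnt x w := by
    intro x h
    simp [hL, List.count_cons, cnt, Fin.mk.injEq]
    omega
  have hcond : (∀ x : Fin ℓ, Even (L.count x)) ↔ (∀ x : ℕ, (cnt x a + cnt x b + cnt x c + cnt x d
      + cnt x p + cnt x q + cnt x r + cnt x w) % 2 = 0) := by
    constructor
    · intro h x
      by_cases hx : x < ℓ
      · have := h ⟨x, hx⟩
        rw [Nat.even_iff, hcount x hx] at this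
        exact this
      · have z : ∀ y : ℕ, y < ℓ → cnt x y = 0 := by
          intro y hy; unfold cnt; rw [if_neg (by omega)]
        rw [z a ha, z b hb, z c hc, z d hd, z p hp, z q hq, z r hr, z w hw]
    · intro h x
      rw [Nat.even_iff]
      have hc2 := hcount x.1 x.2
      rw [Fin.eta] at hc2
      rw [hc2]
      exact h x.1
  calc ∑ σ : Fin ℓ → Bool, eps ℓ σ a * eps ℓ σ b * eps ℓ σ c * eps ℓ σ d
        * eps ℓ σ p * eps ℓ σ q * eps ℓ σ r * eps ℓ σ w
      = ∑ σ : Fin ℓ → Bool, (L.map fun i => sgn (σ i)).prod := by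
        apply Finset.sum_congr rfl
        intro σ _
        simp [hL, eps, ha, hb, hc, hd, hp, hq, hr, hw]
        ring
    _ = if (∀ x : Fin ℓ, Even (L.count x)) then (2:ℝ)^ℓ else 0 := sum_prod_sgn ℓ L
    _ = _ := if_congr hcond rfl rfl

lemma key4 (ℓ a b c d : ℕ) (ha : a < ℓ) (hb : b < ℓ) (hc : c < ℓ) (hd : d < ℓ) :
    ∑ σ : Fin ℓ → Bool, eps ℓ σ a * eps ℓ σ b * eps ℓ σ c * eps ℓ σ d
      = if (∀ x : ℕ, (cnt x a + cnt x b + cnt x c + cnt x d) % 2 = 0) then (2:ℝ)^ℓ else 0 := by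
  set L : List (Fin ℓ) := [⟨a,ha⟩, ⟨b,hb⟩, ⟨c,hc⟩, ⟨d,hd⟩] with hL
  have hcount : ∀ (x : ℕ) (h : x < ℓ), L.count ⟨x,h⟩
      = cnt x a + cnt x b + cnt x c + cnt x d := by
    intro x h
    simp [hL, List.count_cons, cnt, Fin.mk.injEq]
    omega
  have hcond : (∀ x : Fin ℓ, Even (L.count x)) ↔ (∀ x : ℕ,
      (cnt x a + cnt x b + cnt x c + cnt x d) % 2 = 0) := by
    constructor
    · intro h x
      by_cases hx : x < ℓ
      · have := h ⟨x, hx⟩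
        rw [Nat.even_iff, hcount x hx] at this
        exact this
      · have z : ∀ y : ℕ, y < ℓ → cnt x y = 0 := by
          intro y hy; unfold cnt; rw [if_neg (by omega)]
        rw [z a ha, z b hb, z c hc, z d hd]
    · intro h x
      rw [Nat.even_iff]
      have hc2 := hcount x.1 x.2
      rw [Fin.eta] at hc2
      rw [hc2]
      exact h x.1
  calc ∑ σ : Fin ℓ → Bool, eps ℓ σ a * eps ℓ σ b * eps ℓ σ c * eps ℓ σ d
      = ∑ σ : Fin ℓ → Bool, (L.map fun i => sgn (σ i)).prod := by
        apply Finset.sum_congr rfl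
        intro σ _
        simp [hL, eps, ha, hb, hc, hd]
        ring
    _ = if (∀ x : Fin ℓ, Even (L.count x)) then (2:ℝ)^ℓ else 0 := sum_prod_sgn ℓ L
    _ = _ := if_congr hcond rfl rfl




noncomputable def Cfn (ℓ : ℕ) (σ : Fin ℓ → Bool) (t : ℕ) : ℝ :=
  ∑ j ∈ Finset.range (ℓ - t), eps ℓ σ (j + t) * eps ℓ σ j

lemma seq_eq_eps (ℓ : ℕ) (σ : Fin ℓ → Bool) (a : ℕ) : seq ℓ σ (a : ℤ) = eps ℓ σ a := by
  unfold seq eps sgn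
  by_cases h : a < ℓ
  · rw [dif_pos (by constructor <;> omega), dif_pos h]
    norm_num
  · rw [dif_neg (by omega), dif_neg h]

lemma seq_eq_zero_of_neg (ℓ : ℕ) (σ : Fin ℓ → Bool) (j : ℤ) (h : j < 0) : seq ℓ σ j = 0 := by
  unfold seq; rw [dif_neg (by omega)]

lemma seq_eq_zero_of_ge (ℓ : ℕ) (σ : Fin ℓ → Bool) (j : ℤ) (h : (ℓ:ℤ) ≤ j) : seq ℓ σ j = 0 := by
  unfold seq; rw [dif_neg (by omega)]

lemma seq_support (ℓ : ℕ) (σ : Fin ℓ → Bool) (j : ℤ) (h : seq ℓ σ j ≠ 0) :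
    0 ≤ j ∧ j < (ℓ:ℤ) := by
  by_contra hc
  rcases (by omega : j < 0 ∨ (ℓ:ℤ) ≤ j) with h1 | h1
  · exact h (seq_eq_zero_of_neg ℓ σ j h1)
  · exact h (seq_eq_zero_of_ge ℓ σ j h1)

-- autocorr of seq at a nonnegative shift
lemma autocorr_nat (ℓ : ℕ) (σ : Fin ℓ → Bool) (t : ℕ) :
    autocorr (seq ℓ σ) (t : ℤ) = Cfn ℓ σ t := by
  unfold autocorr
  set f := seq ℓ σ with hf
  have hsupp : (Function.support fun j : ℤ => f (j + t) * f j)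
      ⊆ ((Finset.range ℓ).map ⟨(fun a : ℕ => (a:ℤ)), Nat.cast_injective⟩ : Finset ℤ) := by
    intro j hj
    simp only [Function.mem_support] at hj
    have h2 : f j ≠ 0 := fun hz => hj (by rw [hz, mul_zero])
    have := seq_support ℓ σ j h2
    simp only [Finset.mem_coe, Finset.mem_map, Finset.mem_range, Function.Embedding.coeFn_mk]
    exact ⟨j.toNat, by omega, by omega⟩
  rw [finsum_eq_sum_of_support_subset _ hsupp, Finset.sum_map]
  simp only [Function.Embedding.coeFn_mk]
  have step : ∀ a ∈ Finset.range ℓ, f ((a:ℤ) + t) * f a = eps ℓ σ (a + t) * eps ℓ σ a := by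
    intro a _
    have : ((a:ℤ) + t) = ((a + t : ℕ) : ℤ) := by push_cast; ring
    rw [this, hf, seq_eq_eps, seq_eq_eps]
  rw [Finset.sum_congr rfl step]
  unfold Cfn
  -- restrict to range (ℓ - t)
  rw [← Finset.sum_subset (Finset.range_subset_range.2 (by omega : ℓ - t ≤ ℓ))]
  intro a _ ha
  have : ¬ (a + t < ℓ) := by simp at ha ⊢; omega
  unfold eps
  rw [dif_neg this, zero_mul]

lemma autocorr_neg_shift (ℓ : ℕ) (σ : Fin ℓ → Bool) (s : ℤ) :
    autocorr (seq ℓ σ) (-s) = autocorr (seq ℓ σ) s := by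
  unfold autocorr
  set f := seq ℓ σ
  have step : ∀ j : ℤ, f (j + -s) * f j
      = (fun j : ℤ => f (j + s) * f j) ((Equiv.subRight s) j) := by
    intro j
    simp only [Equiv.subRight_apply]
    rw [sub_add_cancel]
    rw [← sub_eq_add_neg]
    ring
  rw [finsum_congr step]
  exact finsum_comp_equiv (Equiv.subRight s) (f := fun j : ℤ => f (j + s) * f j)

lemma autocorr_zero_of_ge (ℓ : ℕ) (σ : Fin ℓ → Bool) (t : ℕ) (h : ℓ ≤ t) :
    autocorr (seq ℓ σ) (t : ℤ) = 0 := by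
  rw [autocorr_nat]
  unfold Cfn
  rw [show ℓ - t = 0 by omega]
  simp

lemma eps_sq (ℓ : ℕ) (σ : Fin ℓ → Bool) (a : ℕ) (h : a < ℓ) :
    eps ℓ σ a * eps ℓ σ a = 1 := by
  unfold eps sgn
  rw [dif_pos h]
  by_cases hb : σ ⟨a, h⟩ <;> simp [hb]

lemma Cfn_zero (ℓ : ℕ) (σ : Fin ℓ → Bool) : Cfn ℓ σ 0 = (ℓ : ℝ) := by
  unfold Cfn
  rw [show ℓ - 0 = ℓ from rfl]
  have h1 : ∀ j ∈ Finset.range ℓ, eps ℓ σ (j + 0) * eps ℓ σ j = 1 := fun j hj => by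
    simpa using eps_sq ℓ σ j (Finset.mem_range.1 (by simpa using hj))
  rw [Finset.sum_congr rfl h1]
  simp

lemma ssac_seq_s2 (ℓ : ℕ) (hℓ : 0 < ℓ) (σ : Fin ℓ → Bool) :
    ssac (seq ℓ σ) = (ℓ:ℝ)^2 + 2 * ∑ t ∈ Finset.Ico 1 ℓ, (Cfn ℓ σ t)^2 := by
  unfold ssac
  set f := seq ℓ σ with hf
  set g : ℤ → ℝ := fun s => autocorr f s ^ 2 with hg
  have hzero : ∀ s : ℤ, ((ℓ:ℤ) ≤ s ∨ s ≤ -(ℓ:ℤ)) → g s = 0 := by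
    intro s hs
    rcases le_or_gt 0 s with h1 | h1
    · have : s = ((s.toNat : ℕ) : ℤ) := by omega
      rw [hg]
      simp only
      rw [this, autocorr_zero_of_ge ℓ σ s.toNat (by omega)]
      norm_num
    · have : -s = (((-s).toNat : ℕ) : ℤ) := by omega
      rw [hg]
      simp only
      rw [show s = -(-s) by ring, this, autocorr_neg_shift,
        autocorr_zero_of_ge ℓ σ (-s).toNat (by omega)]
      norm_num
  have hsupp : Function.support g ⊆ (Finset.Ioo (-(ℓ:ℤ)) (ℓ:ℤ) : Finset ℤ) := by
    intro s hs
    simp only [Function.mem_support] at hs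
    simp only [Finset.coe_Ioo, Set.mem_Ioo]
    by_contra hc
    exact hs (hzero s (by omega))
  rw [finsum_eq_sum_of_support_subset _ hsupp]
  have hsplit : Finset.Ioo (-(ℓ:ℤ)) (ℓ:ℤ)
      = ((Finset.Ico 1 ℓ).map ⟨fun t : ℕ => -(t:ℤ), neg_injective.comp Nat.cast_injective⟩)
        ∪ ((Finset.range ℓ).map ⟨fun t : ℕ => (t:ℤ), Nat.cast_injective⟩) := by
    ext s
    simp only [Finset.mem_Ioo, Finset.mem_union, Finset.mem_map, Finset.mem_Ico,
      Finset.mem_range, Function.Embedding.coeFn_mk]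
    constructor
    · intro ⟨h1, h2⟩
      rcases le_or_gt 0 s with h3 | h3
      · exact Or.inr ⟨s.toNat, by omega, by omega⟩
      · exact Or.inl ⟨(-s).toNat, ⟨by omega, by omega⟩, by omega⟩
    · rintro (⟨t, ⟨h1, h2⟩, h3⟩ | ⟨t, h1, h3⟩) <;> omega
  have hdisj : Disjoint ((Finset.Ico 1 ℓ).map ⟨fun t : ℕ => -(t:ℤ), neg_injective.comp Nat.cast_injective⟩)
      ((Finset.range ℓ).map ⟨fun t : ℕ => (t:ℤ), Nat.cast_injective⟩) := by
    rw [Finset.disjoint_left]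
    intro s hs1 hs2
    simp only [Finset.mem_map, Finset.mem_Ico, Finset.mem_range,
      Function.Embedding.coeFn_mk] at hs1 hs2
    obtain ⟨t1, ⟨h1, _⟩, h2⟩ := hs1
    obtain ⟨t2, _, h4⟩ := hs2
    omega
  rw [hsplit, Finset.sum_union hdisj, Finset.sum_map, Finset.sum_map]
  simp only [Function.Embedding.coeFn_mk]
  have e1 : ∀ t ∈ Finset.Ico 1 ℓ, g (-(t:ℤ)) = (Cfn ℓ σ t)^2 := by
    intro t _
    rw [hg]; simp only
    rw [autocorr_neg_shift, autocorr_nat]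
  have e2 : ∀ t ∈ Finset.range ℓ, g ((t:ℤ)) = (Cfn ℓ σ t)^2 := by
    intro t _
    rw [hg]; simp only
    rw [autocorr_nat]
  rw [Finset.sum_congr rfl e1, Finset.sum_congr rfl e2]
  rw [Finset.range_eq_Ico, Finset.sum_eq_sum_Ico_succ_bot hℓ]
  rw [Cfn_zero]
  ring


-- counting lemmas
lemma ind_split (P Q : Prop) [Decidable P] [Decidable Q] (X : ℝ) :
    (if P ∧ Q then X else 0) = (if P then X else 0) * (if Q then (1:ℝ) else 0) := by
  by_cases hP : P <;> by_cases hQ : Q <;> simp [hP, hQ]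

lemma sum_ind_eq (a : ℕ) (X : ℝ) (j : ℕ) (hj : j < a) :
    ∑ k ∈ Finset.range a, (if j = k then X else 0) = X := by
  rw [Finset.sum_ite_eq (Finset.range a) j (fun _ => X), if_pos (Finset.mem_range.2 hj)]

lemma sum_ind_eq' (a : ℕ) (X : ℝ) (j : ℕ) (hj : j < a) :
    ∑ k ∈ Finset.range a, (if k = j then X else 0) = X := by
  rw [Finset.sum_ite_eq' (Finset.range a) j (fun _ => X), if_pos (Finset.mem_range.2 hj)]

lemma count_pairs (a b : ℕ) (X : ℝ) :
    ∑ j ∈ Finset.range a, ∑ k ∈ Finset.range a, ∑ m ∈ Finset.range b, ∑ n ∈ Finset.range b,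
      (if j = k ∧ m = n then X else 0) = (a * b : ℕ) * X := by
  have e1 : ∀ j k m n : ℕ, (if j = k ∧ m = n then X else 0)
      = (if j = k then X else 0) * (if m = n then (1:ℝ) else 0) := fun j k m n =>
    ind_split _ _ X
  simp only [e1]
  have e2 : ∀ j k : ℕ, ∑ m ∈ Finset.range b, ∑ n ∈ Finset.range b,
      (if j = k then X else 0) * (if m = n then (1:ℝ) else 0)
      = (if j = k then X else 0) * (b : ℝ) := by
    intro j k
    have e3 : ∀ m ∈ Finset.range b, ∑ n ∈ Finset.range b,
        (if j = k then X else 0) * (if m = n then (1:ℝ) else 0)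
        = (if j = k then X else 0) := by
      intro m hm
      rw [← Finset.mul_sum, sum_ind_eq b 1 m (Finset.mem_range.1 hm), mul_one]
    rw [Finset.sum_congr rfl e3, Finset.sum_const, Finset.card_range, nsmul_eq_mul]
    ring
  simp only [e2]
  have e4 : ∀ j ∈ Finset.range a, ∑ k ∈ Finset.range a,
      (if j = k then X else 0) * (b : ℝ) = X * b := by
    intro j hj
    rw [← Finset.sum_mul, sum_ind_eq a X j (Finset.mem_range.1 hj)]
  rw [Finset.sum_congr rfl e4, Finset.sum_const, Finset.card_range, nsmul_eq_mul]
  push_cast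
  ring

-- generic: k,m,n all determined by j
lemma count_cross (a b c : ℕ) (X : ℝ) (u v w : ℕ → ℕ) (hca : c ≤ a)
    (hc : ∀ j, j < a → (j < c ↔ (u j < a ∧ v j < b ∧ w j < b))) :
    ∑ j ∈ Finset.range a, ∑ k ∈ Finset.range a, ∑ m ∈ Finset.range b, ∑ n ∈ Finset.range b,
      (if k = u j ∧ m = v j ∧ n = w j then X else 0) = (c : ℝ) * X := by
  have e1 : ∀ j ∈ Finset.range a, ∑ k ∈ Finset.range a, ∑ m ∈ Finset.range b,
      ∑ n ∈ Finset.range b, (if k = u j ∧ m = v j ∧ n = w j then X else 0)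
      = (if j < c then X else 0) := by
    intro j hj
    have hj' := Finset.mem_range.1 hj
    by_cases h : j < c
    · have ⟨h1, h2, h3⟩ := (hc j hj').1 h
      rw [if_pos h]
      have g1 : ∀ (P : Prop) [Decidable P] (m : ℕ), (∑ n ∈ Finset.range b,
          (if P ∧ m = v j ∧ n = w j then X else 0))
          = if P ∧ m = v j then X else 0 := by
        intro P _ m
        by_cases hP : P ∧ m = v j
        · rw [if_pos hP]
          have : ∀ n : ℕ, (if P ∧ m = v j ∧ n = w j then X else 0)
              = if n = w j then X else 0 := by
            intro n
            by_cases hn : n = w j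
            · rw [if_pos ⟨hP.1, hP.2, hn⟩, if_pos hn]
            · rw [if_neg (fun hh => hn hh.2.2), if_neg hn]
          rw [Finset.sum_congr rfl (fun n _ => this n), sum_ind_eq' b X (w j) h3]
        · rw [if_neg hP]
          apply Finset.sum_eq_zero
          intro n _
          rw [if_neg (fun hh => hP ⟨hh.1, hh.2.1⟩)]
      have g2 : ∀ (P : Prop) [Decidable P], (∑ m ∈ Finset.range b,
          (if P ∧ m = v j then X else 0)) = if P then X else 0 := by
        intro P _
        by_cases hP : P
        · rw [if_pos hP]
          have : ∀ m : ℕ, (if P ∧ m = v j then X else 0) = if m = v j then X else 0 := by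
            intro m
            by_cases hm : m = v j
            · rw [if_pos ⟨hP, hm⟩, if_pos hm]
            · rw [if_neg (fun hh => hm hh.2), if_neg hm]
          rw [Finset.sum_congr rfl (fun m _ => this m), sum_ind_eq' b X (v j) h2]
        · rw [if_neg hP]
          apply Finset.sum_eq_zero
          intro m _
          rw [if_neg (fun hh => hP hh.1)]
      have step : ∀ k ∈ Finset.range a, ∑ m ∈ Finset.range b, ∑ n ∈ Finset.range b,
          (if k = u j ∧ m = v j ∧ n = w j then X else 0) = if k = u j then X else 0 := by
        intro k _
        rw [Finset.sum_congr rfl (fun m _ => g1 (k = u j) m), g2 (k = u j)]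
      rw [Finset.sum_congr rfl step, sum_ind_eq' a X (u j) h1]
    · rw [if_neg h]
      apply Finset.sum_eq_zero; intro k _
      apply Finset.sum_eq_zero; intro m _
      apply Finset.sum_eq_zero; intro n _
      rw [if_neg]
      intro ⟨h1, h2, h3⟩
      subst h1; subst h2; subst h3
      exact h ((hc j hj').2 ⟨Finset.mem_range.1 ‹u j ∈ Finset.range a›,
        Finset.mem_range.1 ‹v j ∈ Finset.range b›, Finset.mem_range.1 ‹w j ∈ Finset.range b›⟩)
  rw [Finset.sum_congr rfl e1]
  have : ∀ j : ℕ, (if j < c then X else 0) = if j ∈ Finset.range c then X else 0 := by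
    intro j; by_cases h : j < c
    · rw [if_pos h, if_pos (Finset.mem_range.2 h)]
    · rw [if_neg h, if_neg (fun hh => h (Finset.mem_range.1 hh))]
  rw [Finset.sum_congr rfl (fun j _ => this j), Finset.sum_ite_mem]
  have : Finset.range a ∩ Finset.range c = Finset.range c := by
    ext x; simp only [Finset.mem_inter, Finset.mem_range]; omega
  rw [this, Finset.sum_const, Finset.card_range, nsmul_eq_mul]

lemma point_off (s t j k m n : ℕ) (hs : 1 ≤ s) (ht : 1 ≤ t) (hst : s ≠ t) (X : ℝ) :
    (if Hyp s t j k m n then X else 0)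
      = (if j = k ∧ m = n then X else 0)
      + (if k = j + t ∧ m = j ∧ n = j + s then X else 0)
      + (if k = j + t ∧ m = j + s ∧ n = j then X else 0)
      + (if j = k + t ∧ m = k ∧ n = k + s then X else 0)
      + (if j = k + t ∧ m = k + s ∧ n = k then X else 0) := by
  by_cases h : Hyp s t j k m n
  · rw [if_pos h]
    rcases B8 s t j k m n hs ht hst h with h1 | h1 | h1 | h1 | h1
    · rw [if_pos h1, if_neg (by omega), if_neg (by omega), if_neg (by omega),
        if_neg (by omega)]; ring
    · rw [if_neg (by omega), if_pos h1, if_neg (by omega), if_neg (by omega),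
        if_neg (by omega)]; ring
    · rw [if_neg (by omega), if_neg (by omega), if_pos h1, if_neg (by omega),
        if_neg (by omega)]; ring
    · rw [if_neg (by omega), if_neg (by omega), if_neg (by omega), if_pos h1,
        if_neg (by omega)]; ring
    · rw [if_neg (by omega), if_neg (by omega), if_neg (by omega), if_neg (by omega),
        if_pos h1]; ring
  · have hn1 : ¬(j = k ∧ m = n) := by
      rintro ⟨e1, e2⟩; exact h (by rw [e1, e2]; exact hyp_of_pair1 s t k n)
    have hn2 : ¬(k = j + t ∧ m = j ∧ n = j + s) := by
      rintro ⟨e1, e2, e3⟩; exact h (by rw [e1, e2, e3]; exact hyp_of_c1 s t j)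
    have hn3 : ¬(k = j + t ∧ m = j + s ∧ n = j) := by
      rintro ⟨e1, e2, e3⟩; exact h (by rw [e1, e2, e3]; exact hyp_of_c2 s t j)
    have hn4 : ¬(j = k + t ∧ m = k ∧ n = k + s) := by
      rintro ⟨e1, e2, e3⟩; exact h (by rw [e1, e2, e3]; exact hyp_of_c3 s t k)
    have hn5 : ¬(j = k + t ∧ m = k + s ∧ n = k) := by
      rintro ⟨e1, e2, e3⟩; exact h (by rw [e1, e2, e3]; exact hyp_of_c4 s t k)
    rw [if_neg h, if_neg hn1, if_neg hn2, if_neg hn3, if_neg hn4, if_neg hn5]; ring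

lemma point_diag (s j k m n : ℕ) (hs : 1 ≤ s) (X : ℝ) :
    (if Hyp s s j k m n then X else 0)
      = (if j = k ∧ m = n then X else 0)
      + (if m = j ∧ n = k then X else 0)
      + (if m = k ∧ n = j then X else 0)
      - 2 * (if k = j ∧ m = j ∧ n = j then X else 0) := by
  have hiff : Hyp s s j k m n ↔ (j = k ∧ m = n) ∨ (j = m ∧ k = n) ∨ (j = n ∧ k = m) := by
    constructor
    · exact C8 s j k m n hs
    · rintro (⟨e1, e2⟩ | ⟨e1, e2⟩ | ⟨e1, e2⟩)
      · rw [e1, e2]; exact hyp_of_pair1 s s k n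
      · rw [← e1, ← e2]; exact hyp_diag2 s j k
      · rw [← e1, ← e2]; exact hyp_diag3 s j k
  by_cases h1 : j = k ∧ m = n <;> by_cases h2 : j = m ∧ k = n <;> by_cases h3 : j = n ∧ k = m
  · rw [if_pos (hiff.2 (Or.inl h1)), if_pos h1, if_pos (by omega : m = j ∧ n = k),
      if_pos (by omega : m = k ∧ n = j), if_pos (by omega : k = j ∧ m = j ∧ n = j)]; ring
  · omega
  · omega
  · rw [if_pos (hiff.2 (Or.inl h1)), if_pos h1, if_neg (by omega : ¬(m = j ∧ n = k)),
      if_neg (by omega : ¬(m = k ∧ n = j)), if_neg (by omega : ¬(k = j ∧ m = j ∧ n = j))]; ring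
  · omega
  · rw [if_pos (hiff.2 (Or.inr (Or.inl h2))), if_neg h1, if_pos (by omega : m = j ∧ n = k),
      if_neg (by omega : ¬(m = k ∧ n = j)), if_neg (by omega : ¬(k = j ∧ m = j ∧ n = j))]; ring
  · rw [if_pos (hiff.2 (Or.inr (Or.inr h3))), if_neg h1, if_neg (by omega : ¬(m = j ∧ n = k)),
      if_pos (by omega : m = k ∧ n = j), if_neg (by omega : ¬(k = j ∧ m = j ∧ n = j))]; ring
  · rw [if_neg (fun hh => by rcases hiff.1 hh with hx | hx | hx <;> omega), if_neg h1,
      if_neg (by omega : ¬(m = j ∧ n = k)), if_neg (by omega : ¬(m = k ∧ n = j)),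
      if_neg (by omega : ¬(k = j ∧ m = j ∧ n = j))]; ring

lemma count_mn (ν : ℕ) (X : ℝ) (p q : ℕ → ℕ → ℕ)
    (hp : ∀ j k, j < ν → k < ν → p j k < ν ∧ q j k < ν) :
    ∑ j ∈ Finset.range ν, ∑ k ∈ Finset.range ν, ∑ m ∈ Finset.range ν, ∑ n ∈ Finset.range ν,
      (if m = p j k ∧ n = q j k then X else 0) = (ν * ν : ℕ) * X := by
  have e1 : ∀ j ∈ Finset.range ν, ∀ k ∈ Finset.range ν,
      ∑ m ∈ Finset.range ν, ∑ n ∈ Finset.range ν,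
        (if m = p j k ∧ n = q j k then X else 0) = X := by
    intro j hj k hk
    obtain ⟨hpv, hqv⟩ := hp j k (Finset.mem_range.1 hj) (Finset.mem_range.1 hk)
    have inner : ∀ m : ℕ, ∑ n ∈ Finset.range ν, (if m = p j k ∧ n = q j k then X else 0)
        = if m = p j k then X else 0 := by
      intro m
      by_cases hm : m = p j k
      · rw [if_pos hm]
        have : ∀ n : ℕ, (if m = p j k ∧ n = q j k then X else 0)
            = if n = q j k then X else 0 := by
          intro n; by_cases hn : n = q j k
          · rw [if_pos ⟨hm, hn⟩, if_pos hn]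
          · rw [if_neg (fun hh => hn hh.2), if_neg hn]
        rw [Finset.sum_congr rfl (fun n _ => this n), sum_ind_eq' ν X (q j k) hqv]
      · rw [if_neg hm]
        apply Finset.sum_eq_zero; intro n _
        rw [if_neg (fun hh => hm hh.1)]
    rw [Finset.sum_congr rfl (fun m _ => inner m), sum_ind_eq' ν X (p j k) hpv]
  rw [Finset.sum_congr rfl (fun j hj => Finset.sum_congr rfl (fun k hk => e1 j hj k hk))]
  simp only [Finset.sum_const, Finset.card_range, nsmul_eq_mul]
  push_cast; ring

lemma expand_CC (ℓ s t : ℕ) (σ : Fin ℓ → Bool) :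
    (Cfn ℓ σ s)^2 * (Cfn ℓ σ t)^2
      = ∑ j ∈ Finset.range (ℓ-s), ∑ k ∈ Finset.range (ℓ-s),
          ∑ m ∈ Finset.range (ℓ-t), ∑ n ∈ Finset.range (ℓ-t),
          (eps ℓ σ (j+s) * eps ℓ σ j) * (eps ℓ σ (k+s) * eps ℓ σ k)
            * ((eps ℓ σ (m+t) * eps ℓ σ m) * (eps ℓ σ (n+t) * eps ℓ σ n)) := by
  unfold Cfn
  rw [sq, sq, Finset.sum_mul_sum, Finset.sum_mul_sum, Finset.sum_mul_sum]
  apply Finset.sum_congr rfl; intro j _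
  rw [Finset.sum_congr rfl (fun k _ => Finset.sum_mul_sum
    (Finset.range (ℓ-s)) (Finset.range (ℓ-t))
    (fun x => eps ℓ σ (j + s) * eps ℓ σ j * (eps ℓ σ (x + s) * eps ℓ σ x))
    (fun n => eps ℓ σ (k + t) * eps ℓ σ k * (eps ℓ σ (n + t) * eps ℓ σ n)))]
  rw [Finset.sum_comm]

lemma sum_sigma_CC (ℓ s t : ℕ) (hs1 : 1 ≤ s) (hs2 : s < ℓ) (ht1 : 1 ≤ t) (ht2 : t < ℓ) :
    ∑ σ : Fin ℓ → Bool, (Cfn ℓ σ s)^2 * (Cfn ℓ σ t)^2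
      = 2^ℓ * ( ((ℓ-s : ℕ) : ℝ) * ((ℓ-t : ℕ) : ℝ)
          + if s = t then 2*((ℓ-s:ℕ):ℝ)^2 - 2*((ℓ-s:ℕ):ℝ) else 4*((ℓ-s-t : ℕ):ℝ) ) := by
  have step1 : ∑ σ : Fin ℓ → Bool, (Cfn ℓ σ s)^2 * (Cfn ℓ σ t)^2
      = ∑ j ∈ Finset.range (ℓ-s), ∑ k ∈ Finset.range (ℓ-s),
          ∑ m ∈ Finset.range (ℓ-t), ∑ n ∈ Finset.range (ℓ-t),
          (if Hyp s t j k m n then (2:ℝ)^ℓ else 0) := by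
    rw [Finset.sum_congr rfl (fun σ _ => expand_CC ℓ s t σ), Finset.sum_comm]
    apply Finset.sum_congr rfl; intro j hj
    rw [Finset.sum_comm]
    apply Finset.sum_congr rfl; intro k hk
    rw [Finset.sum_comm]
    apply Finset.sum_congr rfl; intro m hm
    rw [Finset.sum_comm]
    apply Finset.sum_congr rfl; intro n hn
    have hj' := Finset.mem_range.1 hj
    have hk' := Finset.mem_range.1 hk
    have hm' := Finset.mem_range.1 hm
    have hn' := Finset.mem_range.1 hn
    have e1 : ∀ σ : Fin ℓ → Bool,
        (eps ℓ σ (j+s) * eps ℓ σ j) * (eps ℓ σ (k+s) * eps ℓ σ k)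
          * ((eps ℓ σ (m+t) * eps ℓ σ m) * (eps ℓ σ (n+t) * eps ℓ σ n))
        = eps ℓ σ j * eps ℓ σ (j+s) * eps ℓ σ k * eps ℓ σ (k+s)
          * eps ℓ σ m * eps ℓ σ (m+t) * eps ℓ σ n * eps ℓ σ (n+t) := fun σ => by ring
    rw [Finset.sum_congr rfl (fun σ _ => e1 σ),
      key8 ℓ j (j+s) k (k+s) m (m+t) n (n+t) (by omega) (by omega) (by omega) (by omega)
        (by omega) (by omega) (by omega) (by omega)]
    exact if_congr Iff.rfl rfl rfl
  rw [step1]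
  by_cases hst : s = t
  · subst hst
    rw [if_pos rfl]
    have pt : ∀ j k m n : ℕ, (if Hyp s s j k m n then (2:ℝ)^ℓ else 0)
        = (if j = k ∧ m = n then (2:ℝ)^ℓ else 0)
        + (if m = j ∧ n = k then (2:ℝ)^ℓ else 0)
        + (if m = k ∧ n = j then (2:ℝ)^ℓ else 0)
        - 2 * (if k = j ∧ m = j ∧ n = j then (2:ℝ)^ℓ else 0) := fun j k m n =>
      point_diag s j k m n hs1 ((2:ℝ)^ℓ)
    simp only [pt, Finset.sum_add_distrib, Finset.sum_sub_distrib, ← Finset.mul_sum]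
    have c1 := count_pairs (ℓ-s) (ℓ-s) ((2:ℝ)^ℓ)
    have c2 : ∑ j ∈ Finset.range (ℓ-s), ∑ k ∈ Finset.range (ℓ-s),
        ∑ m ∈ Finset.range (ℓ-s), ∑ n ∈ Finset.range (ℓ-s),
        (if m = j ∧ n = k then (2:ℝ)^ℓ else 0) = ((ℓ-s) * (ℓ-s) : ℕ) * (2:ℝ)^ℓ :=
      count_mn (ℓ-s) ((2:ℝ)^ℓ) (fun j _ => j) (fun _ k => k) (fun j k hj hk => ⟨hj, hk⟩)
    have c3 : ∑ j ∈ Finset.range (ℓ-s), ∑ k ∈ Finset.range (ℓ-s),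
        ∑ m ∈ Finset.range (ℓ-s), ∑ n ∈ Finset.range (ℓ-s),
        (if m = k ∧ n = j then (2:ℝ)^ℓ else 0) = ((ℓ-s) * (ℓ-s) : ℕ) * (2:ℝ)^ℓ :=
      count_mn (ℓ-s) ((2:ℝ)^ℓ) (fun _ k => k) (fun j _ => j) (fun j k hj hk => ⟨hk, hj⟩)
    have c4 : ∑ j ∈ Finset.range (ℓ-s), ∑ k ∈ Finset.range (ℓ-s),
        ∑ m ∈ Finset.range (ℓ-s), ∑ n ∈ Finset.range (ℓ-s),
        (if k = j ∧ m = j ∧ n = j then (2:ℝ)^ℓ else 0) = ((ℓ-s : ℕ) : ℝ) * (2:ℝ)^ℓ :=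
      count_cross (ℓ-s) (ℓ-s) (ℓ-s) ((2:ℝ)^ℓ) (fun j => j) (fun j => j) (fun j => j)
        le_rfl (fun j hj => by beta_reduce; omega)
    rw [c1, c2, c3, c4]
    push_cast
    ring
  · rw [if_neg hst]
    have pt : ∀ j k m n : ℕ, (if Hyp s t j k m n then (2:ℝ)^ℓ else 0)
        = (if j = k ∧ m = n then (2:ℝ)^ℓ else 0)
        + (if k = j + t ∧ m = j ∧ n = j + s then (2:ℝ)^ℓ else 0)
        + (if k = j + t ∧ m = j + s ∧ n = j then (2:ℝ)^ℓ else 0)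
        + (if j = k + t ∧ m = k ∧ n = k + s then (2:ℝ)^ℓ else 0)
        + (if j = k + t ∧ m = k + s ∧ n = k then (2:ℝ)^ℓ else 0) := fun j k m n =>
      point_off s t j k m n hs1 ht1 hst ((2:ℝ)^ℓ)
    simp only [pt, Finset.sum_add_distrib]
    have c0 := count_pairs (ℓ-s) (ℓ-t) ((2:ℝ)^ℓ)
    have c1 : ∑ j ∈ Finset.range (ℓ-s), ∑ k ∈ Finset.range (ℓ-s),
        ∑ m ∈ Finset.range (ℓ-t), ∑ n ∈ Finset.range (ℓ-t),
        (if k = j + t ∧ m = j ∧ n = j + s then (2:ℝ)^ℓ else 0)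
        = ((ℓ-s-t : ℕ) : ℝ) * (2:ℝ)^ℓ :=
      count_cross (ℓ-s) (ℓ-t) (ℓ-s-t) ((2:ℝ)^ℓ) (fun j => j + t) (fun j => j) (fun j => j + s)
        (by omega) (fun j hj => by beta_reduce; omega)
    have c2 : ∑ j ∈ Finset.range (ℓ-s), ∑ k ∈ Finset.range (ℓ-s),
        ∑ m ∈ Finset.range (ℓ-t), ∑ n ∈ Finset.range (ℓ-t),
        (if k = j + t ∧ m = j + s ∧ n = j then (2:ℝ)^ℓ else 0)
        = ((ℓ-s-t : ℕ) : ℝ) * (2:ℝ)^ℓ :=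
      count_cross (ℓ-s) (ℓ-t) (ℓ-s-t) ((2:ℝ)^ℓ) (fun j => j + t) (fun j => j + s) (fun j => j)
        (by omega) (fun j hj => by beta_reduce; omega)
    have c3 : ∑ j ∈ Finset.range (ℓ-s), ∑ k ∈ Finset.range (ℓ-s),
        ∑ m ∈ Finset.range (ℓ-t), ∑ n ∈ Finset.range (ℓ-t),
        (if j = k + t ∧ m = k ∧ n = k + s then (2:ℝ)^ℓ else 0)
        = ((ℓ-s-t : ℕ) : ℝ) * (2:ℝ)^ℓ := by
      rw [Finset.sum_comm]
      exact count_cross (ℓ-s) (ℓ-t) (ℓ-s-t) ((2:ℝ)^ℓ) (fun k => k + t) (fun k => k)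
        (fun k => k + s) (by omega) (fun k hk => by beta_reduce; omega)
    have c4 : ∑ j ∈ Finset.range (ℓ-s), ∑ k ∈ Finset.range (ℓ-s),
        ∑ m ∈ Finset.range (ℓ-t), ∑ n ∈ Finset.range (ℓ-t),
        (if j = k + t ∧ m = k + s ∧ n = k then (2:ℝ)^ℓ else 0)
        = ((ℓ-s-t : ℕ) : ℝ) * (2:ℝ)^ℓ := by
      rw [Finset.sum_comm]
      exact count_cross (ℓ-s) (ℓ-t) (ℓ-s-t) ((2:ℝ)^ℓ) (fun k => k + t) (fun k => k + s)
        (fun k => k) (by omega) (fun k hk => by beta_reduce; omega)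
    rw [c0, c1, c2, c3, c4]
    push_cast
    ring

lemma sum_sigma_C (ℓ t : ℕ) (ht1 : 1 ≤ t) (ht2 : t < ℓ) :
    ∑ σ : Fin ℓ → Bool, (Cfn ℓ σ t)^2 = 2^ℓ * ((ℓ-t : ℕ) : ℝ) := by
  have step1 : ∑ σ : Fin ℓ → Bool, (Cfn ℓ σ t)^2
      = ∑ j ∈ Finset.range (ℓ-t), ∑ k ∈ Finset.range (ℓ-t),
          (if (∀ x : ℕ, (cnt x j + cnt x (j+t) + cnt x k + cnt x (k+t)) % 2 = 0)
            then (2:ℝ)^ℓ else 0) := by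
    have e0 : ∀ σ : Fin ℓ → Bool, (Cfn ℓ σ t)^2
        = ∑ j ∈ Finset.range (ℓ-t), ∑ k ∈ Finset.range (ℓ-t),
            eps ℓ σ j * eps ℓ σ (j+t) * eps ℓ σ k * eps ℓ σ (k+t) := by
      intro σ
      unfold Cfn
      rw [sq, Finset.sum_mul_sum]
      apply Finset.sum_congr rfl; intro j _
      apply Finset.sum_congr rfl; intro k _
      ring
    rw [Finset.sum_congr rfl (fun σ _ => e0 σ), Finset.sum_comm]
    apply Finset.sum_congr rfl; intro j hj
    rw [Finset.sum_comm]
    apply Finset.sum_congr rfl; intro k hk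
    have hj' := Finset.mem_range.1 hj
    have hk' := Finset.mem_range.1 hk
    rw [key4 ℓ j (j+t) k (k+t) (by omega) (by omega) (by omega) (by omega)]
  rw [step1]
  have pt : ∀ j k : ℕ, (if (∀ x : ℕ, (cnt x j + cnt x (j+t) + cnt x k + cnt x (k+t)) % 2 = 0)
      then (2:ℝ)^ℓ else 0) = if j = k then (2:ℝ)^ℓ else 0 := by
    intro j k
    by_cases h : ∀ x : ℕ, (cnt x j + cnt x (j+t) + cnt x k + cnt x (k+t)) % 2 = 0
    · rw [if_pos h]
      rcases even4_pairing _ _ _ _ h with ⟨h1, h2⟩ | ⟨h1, h2⟩ | ⟨h1, h2⟩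
      · omega
      · rw [if_pos h1]
      · omega
    · rw [if_neg h, if_neg]
      intro he
      exact h (by subst he; intro x; omega)
  simp only [pt]
  have inner : ∀ j ∈ Finset.range (ℓ-t), ∑ k ∈ Finset.range (ℓ-t),
      (if j = k then (2:ℝ)^ℓ else 0) = (2:ℝ)^ℓ := fun j hj =>
    sum_ind_eq (ℓ-t) ((2:ℝ)^ℓ) j (Finset.mem_range.1 hj)
  rw [Finset.sum_congr rfl inner, Finset.sum_const, Finset.card_range, nsmul_eq_mul]
  ring

-- numeric summation lemmas
lemma gauss2 (p : ℕ) : 2 * ∑ i ∈ Finset.range p, (i+1) = p * (p+1) := by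
  induction p with
  | zero => simp
  | succ p ih => rw [Finset.sum_range_succ, Nat.mul_add, ih]; ring

lemma reindexIco {M : Type*} [AddCommMonoid M] (ℓ : ℕ) (g : ℕ → M) :
    ∑ s ∈ Finset.Ico 1 ℓ, g (ℓ - s) = ∑ i ∈ Finset.range (ℓ-1), g (i+1) := by
  rw [Finset.sum_Ico_eq_sum_range]
  have hrefl := Finset.sum_range_reflect (fun i => g (i+1)) (ℓ-1)
  have e : ∀ i ∈ Finset.range (ℓ-1), g (ℓ - (1+i)) = g ((ℓ-1) - 1 - i + 1) := by
    intro i hi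
    have := Finset.mem_range.1 hi
    congr 1
    omega
  rw [Finset.sum_congr rfl e]
  exact hrefl

lemma cube' (m : ℕ) : 3 * ∑ i ∈ Finset.range (m+1), (i*i + i) = m*(m+1)*(m+2) := by
  induction m with
  | zero => simp
  | succ m ih => rw [Finset.sum_range_succ, Nat.mul_add, ih]; ring

lemma natA (ℓ : ℕ) (h : 1 ≤ ℓ) :
    3 * ∑ s ∈ Finset.Ico 1 ℓ, ((ℓ-s)*(ℓ-s) - (ℓ-s)) = ℓ*(ℓ-1)*(ℓ-2) := by
  rw [reindexIco ℓ (fun ν => ν*ν - ν)]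
  have pw : ∀ i, (i+1)*(i+1) - (i+1) = i*i + i := by
    intro i
    apply Nat.sub_eq_of_eq_add
    ring
  rw [Finset.sum_congr rfl (fun i _ => pw i)]
  rcases (by omega : ℓ = 1 ∨ 2 ≤ ℓ) with h1 | h1
  · subst h1; simp
  · obtain ⟨m, rfl⟩ : ∃ m, ℓ = m + 2 := ⟨ℓ - 2, by omega⟩
    rw [show m + 2 - 1 = m + 1 by omega, show m + 2 - 2 = m by omega, cube']
    ring

lemma natB (ℓ : ℕ) (h : 1 ≤ ℓ) :
    6 * ∑ s ∈ Finset.Ico 1 ℓ, ∑ t ∈ Finset.Ico 1 ℓ, (ℓ - s - t) = ℓ*(ℓ-1)*(ℓ-2) := by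
  have inner : ∀ s ∈ Finset.Ico 1 ℓ, 2 * ∑ t ∈ Finset.Ico 1 ℓ, (ℓ - s - t)
      = (ℓ-s)*(ℓ-s) - (ℓ-s) := by
    intro s hs
    obtain ⟨hs1, hs2⟩ := Finset.mem_Ico.1 hs
    have hsub : ∑ t ∈ Finset.Ico 1 (ℓ - s), (ℓ - s - t) = ∑ t ∈ Finset.Ico 1 ℓ, (ℓ - s - t) := by
      apply Finset.sum_subset
      · apply Finset.Ico_subset_Ico le_rfl
        omega
      · intro x hx hx2
        simp only [Finset.mem_Ico] at hx hx2
        omega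
    rw [← hsub, reindexIco (ℓ - s) (fun ν => ν)]
    rcases (by omega : ℓ - s = 0 ∨ 1 ≤ ℓ - s) with h1 | h1
    · rw [h1]; simp
    · obtain ⟨p, hp⟩ : ∃ p, ℓ - s = p + 1 := ⟨ℓ - s - 1, by omega⟩
      rw [hp, show p + 1 - 1 = p by omega, gauss2]
      apply (Nat.sub_eq_of_eq_add _).symm
      ring
  calc 6 * ∑ s ∈ Finset.Ico 1 ℓ, ∑ t ∈ Finset.Ico 1 ℓ, (ℓ - s - t)
      = 3 * ∑ s ∈ Finset.Ico 1 ℓ, 2 * ∑ t ∈ Finset.Ico 1 ℓ, (ℓ - s - t) := by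
        rw [Finset.mul_sum, Finset.mul_sum]
        exact Finset.sum_congr rfl (fun s _ => by ring)
    _ = 3 * ∑ s ∈ Finset.Ico 1 ℓ, ((ℓ-s)*(ℓ-s) - (ℓ-s)) := by
        rw [Finset.sum_congr rfl inner]
    _ = ℓ*(ℓ-1)*(ℓ-2) := natA ℓ h

lemma natC_even (ℓ : ℕ) (h : 1 ≤ ℓ) (he : Even ℓ) :
    4 * ∑ s ∈ Finset.Ico 1 ℓ, (ℓ - s - s) = ℓ*ℓ - 2*ℓ := by
  obtain ⟨r, rfl⟩ : ∃ r, ℓ = 2*r := by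
    obtain ⟨r, hr⟩ := he; exact ⟨r, by omega⟩
  have pw : ∀ s ∈ Finset.Ico 1 (2*r), (2*r - s - s) = 2*(r - s) := by intro s _; omega
  rw [Finset.sum_congr rfl pw]
  have hsub : ∑ s ∈ Finset.Ico 1 r, 2*(r - s) = ∑ s ∈ Finset.Ico 1 (2*r), 2*(r - s) := by
    apply Finset.sum_subset
    · apply Finset.Ico_subset_Ico le_rfl
      omega
    · intro x hx hx2
      simp only [Finset.mem_Ico] at hx hx2
      omega
  rw [← hsub, ← Finset.mul_sum, reindexIco r (fun ν => ν)]
  rcases (by omega : r = 0 ∨ 1 ≤ r) with h1 | h1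
  · rw [h1]; simp
  · obtain ⟨p, rfl⟩ : ∃ p, r = p + 1 := ⟨r - 1, by omega⟩
    rw [show p + 1 - 1 = p by omega, gauss2]
    have e : (2*(p+1))*(2*(p+1)) = 4*(p*(p+1)) + (2*(p+1)) + (2*(p+1)) := by ring
    omega

lemma natC_odd (ℓ : ℕ) (h : 1 ≤ ℓ) (ho : Odd ℓ) :
    4 * ∑ s ∈ Finset.Ico 1 ℓ, (ℓ - s - s) = (ℓ-1)*(ℓ-1) := by
  obtain ⟨r, rfl⟩ : ∃ r, ℓ = 2*r + 1 := by
    obtain ⟨r, hr⟩ := ho; exact ⟨r, by omega⟩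
  have hsub : ∑ s ∈ Finset.Ico 1 (r+1), (2*r+1 - s - s)
      = ∑ s ∈ Finset.Ico 1 (2*r+1), (2*r+1 - s - s) := by
    apply Finset.sum_subset
    · apply Finset.Ico_subset_Ico le_rfl
      omega
    · intro x hx hx2
      simp only [Finset.mem_Ico] at hx hx2
      omega
  have pw : ∀ s ∈ Finset.Ico 1 (r+1), (2*r+1 - s - s) = 2*(r - s) + 1 := by
    intro s hs
    have := Finset.mem_Ico.1 hs
    omega
  rw [← hsub, Finset.sum_congr rfl pw, Finset.sum_add_distrib, ← Finset.mul_sum]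
  have pw3 : ∀ i ∈ Finset.Ico 1 (r+1), (r - i) = ((r+1) - i) - 1 := by
    intro i _; omega
  rw [Finset.sum_congr rfl pw3, reindexIco (r+1) (fun ν => ν - 1)]
  have pw2 : ∀ i ∈ Finset.range (r+1-1), (i + 1 - 1 : ℕ) = i := by intro i _; omega
  rw [Finset.sum_congr rfl pw2, show r+1-1 = r by omega]
  simp only [Finset.sum_const, Nat.card_Ico, smul_eq_mul, mul_one]
  rw [show r + 1 - 1 = r by omega, show 2*r+1-1 = 2*r by omega]
  have g2 : 2 * ∑ i ∈ Finset.range r, i = r * (r-1) := by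
    rcases (by omega : r = 0 ∨ 1 ≤ r) with h1 | h1
    · rw [h1]; simp
    · obtain ⟨p, rfl⟩ : ∃ p, r = p + 1 := ⟨r - 1, by omega⟩
      rw [Finset.sum_range_succ', show p + 1 - 1 = p by omega]
      simp only [Nat.add_zero]
      rw [gauss2]
      have e : p*(p+1) = (p+1)*p := by ring
      omega
  rcases (by omega : r = 0 ∨ 1 ≤ r) with h1 | h1
  · rw [h1] at g2 ⊢; simp
  · have e : (2*r)*(2*r) = 4*(r*(r-1)) + 4*r := by
      obtain ⟨p, rfl⟩ : ∃ p, r = p + 1 := ⟨r - 1, by omega⟩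
      rw [show p + 1 - 1 = p by omega]
      ring
    omega

lemma cast_prod3 (ℓ : ℕ) (h : 1 ≤ ℓ) :
    ((ℓ*(ℓ-1)*(ℓ-2) : ℕ) : ℝ) = (ℓ:ℝ)^3 - 3*(ℓ:ℝ)^2 + 2*(ℓ:ℝ) := by
  rcases (by omega : ℓ = 1 ∨ 2 ≤ ℓ) with h1 | h1
  · subst h1; norm_num
  · have e1 : ((ℓ - 1 : ℕ) : ℝ) = (ℓ:ℝ) - 1 := by
      rw [Nat.cast_sub (by omega)]; norm_num
    have e2 : ((ℓ - 2 : ℕ) : ℝ) = (ℓ:ℝ) - 2 := by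
      rw [Nat.cast_sub (by omega)]; norm_num
    push_cast [e1, e2]
    ring

theorem variance_ssac' (ℓ : ℕ) (hℓ : 0 < ℓ) :
    (Even ℓ →
      cmom 2 ℓ ssac = (16 * (ℓ : ℝ) ^ 3 - 60 * (ℓ : ℝ) ^ 2 + 56 * (ℓ : ℝ)) / 3) ∧
    (Odd ℓ →
      cmom 2 ℓ ssac = (16 * (ℓ : ℝ) ^ 3 - 60 * (ℓ : ℝ) ^ 2 + 56 * (ℓ : ℝ) - 12) / 3) := by
  have hpow : ((2:ℝ)^ℓ) ≠ 0 := by positivity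
  set T : (Fin ℓ → Bool) → ℝ := fun σ => ∑ t ∈ Finset.Ico 1 ℓ, (Cfn ℓ σ t)^2 with hT
  set At : ℝ := ∑ t ∈ Finset.Ico 1 ℓ, ((ℓ-t : ℕ) : ℝ) with hAt
  set WW : ℝ := ∑ s ∈ Finset.Ico 1 ℓ, ∑ t ∈ Finset.Ico 1 ℓ,
      ( ((ℓ-s : ℕ) : ℝ) * ((ℓ-t : ℕ) : ℝ)
        + if s = t then 2*((ℓ-s:ℕ):ℝ)^2 - 2*((ℓ-s:ℕ):ℝ) else 4*((ℓ-s-t : ℕ):ℝ) ) with hWW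
  have hsT : ∑ σ : Fin ℓ → Bool, T σ = 2^ℓ * At := by
    rw [hT, Finset.sum_comm, hAt, Finset.mul_sum]
    apply Finset.sum_congr rfl
    intro t ht
    obtain ⟨ht1, ht2⟩ := Finset.mem_Ico.1 ht
    exact sum_sigma_C ℓ t ht1 ht2
  have hsT2 : ∑ σ : Fin ℓ → Bool, (T σ)^2 = 2^ℓ * WW := by
    have e0 : ∀ σ : Fin ℓ → Bool, (T σ)^2
        = ∑ s ∈ Finset.Ico 1 ℓ, ∑ t ∈ Finset.Ico 1 ℓ, (Cfn ℓ σ s)^2 * (Cfn ℓ σ t)^2 := by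
      intro σ
      rw [hT, sq, Finset.sum_mul_sum]
    rw [Finset.sum_congr rfl (fun σ _ => e0 σ), Finset.sum_comm, hWW, Finset.mul_sum]
    apply Finset.sum_congr rfl
    intro s hs
    obtain ⟨hs1, hs2⟩ := Finset.mem_Ico.1 hs
    rw [Finset.sum_comm, Finset.mul_sum]
    apply Finset.sum_congr rfl
    intro t ht
    obtain ⟨ht1, ht2⟩ := Finset.mem_Ico.1 ht
    exact sum_sigma_CC ℓ s t hs1 hs2 ht1 ht2
  have hcard : ∑ σ : Fin ℓ → Bool, (1:ℝ) = 2^ℓ := by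
    rw [Finset.sum_const, Finset.card_univ]
    simp [mul_one]
  have hE : expect ℓ ssac = (ℓ:ℝ)^2 + 2 * At := by
    have h0 : expect ℓ ssac = (∑ σ : Fin ℓ → Bool, ssac (seq ℓ σ)) / 2^ℓ := rfl
    rw [h0, Finset.sum_congr rfl (fun σ _ => ssac_seq_s2 ℓ hℓ σ)]
    have e1 : ∀ σ : Fin ℓ → Bool, (ℓ:ℝ)^2 + 2 * ∑ t ∈ Finset.Ico 1 ℓ, (Cfn ℓ σ t)^2
        = (ℓ:ℝ)^2 * 1 + 2 * T σ := by intro σ; rw [hT]; ring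
    rw [Finset.sum_congr rfl (fun σ _ => e1 σ), Finset.sum_add_distrib, ← Finset.mul_sum,
      ← Finset.mul_sum, hcard, hsT]
    field_simp
  have hVar : cmom 2 ℓ ssac = 4 * (WW - At^2) := by
    have h0 : cmom 2 ℓ ssac
        = (∑ σ : Fin ℓ → Bool, (ssac (seq ℓ σ) - expect ℓ ssac)^2) / 2^ℓ := rfl
    rw [h0]
    have e1 : ∀ σ : Fin ℓ → Bool, (ssac (seq ℓ σ) - expect ℓ ssac)^2
        = 4*(T σ)^2 + (-8*At)*(T σ) + (4*At^2) * 1 := by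
      intro σ
      rw [ssac_seq_s2 ℓ hℓ σ, hE, hT]
      ring
    rw [Finset.sum_congr rfl (fun σ _ => e1 σ), Finset.sum_add_distrib,
      Finset.sum_add_distrib, ← Finset.mul_sum, ← Finset.mul_sum, ← Finset.mul_sum,
      hcard, hsT, hsT2]
    field_simp
    ring
  have hWA : WW - At^2 = ∑ s ∈ Finset.Ico 1 ℓ, ∑ t ∈ Finset.Ico 1 ℓ,
      (if s = t then 2*((ℓ-s:ℕ):ℝ)^2 - 2*((ℓ-s:ℕ):ℝ) else 4*((ℓ-s-t : ℕ):ℝ)) := by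
    rw [hWW, hAt, sq, Finset.sum_mul_sum, ← Finset.sum_sub_distrib]
    apply Finset.sum_congr rfl
    intro s _
    rw [← Finset.sum_sub_distrib]
    apply Finset.sum_congr rfl
    intro t _
    ring
  have hsplit : ∑ s ∈ Finset.Ico 1 ℓ, ∑ t ∈ Finset.Ico 1 ℓ,
      (if s = t then 2*((ℓ-s:ℕ):ℝ)^2 - 2*((ℓ-s:ℕ):ℝ) else 4*((ℓ-s-t : ℕ):ℝ))
      = ∑ s ∈ Finset.Ico 1 ℓ,
          (2*((ℓ-s:ℕ):ℝ)^2 - 2*((ℓ-s:ℕ):ℝ) - 4*((ℓ-s-s : ℕ):ℝ))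
        + ∑ s ∈ Finset.Ico 1 ℓ, ∑ t ∈ Finset.Ico 1 ℓ, 4*((ℓ-s-t : ℕ):ℝ) := by
    rw [← Finset.sum_add_distrib]
    apply Finset.sum_congr rfl
    intro s hs
    have pw : ∀ t : ℕ, (if s = t then 2*((ℓ-s:ℕ):ℝ)^2 - 2*((ℓ-s:ℕ):ℝ) else 4*((ℓ-s-t : ℕ):ℝ))
        = (if s = t then 2*((ℓ-s:ℕ):ℝ)^2 - 2*((ℓ-s:ℕ):ℝ) - 4*((ℓ-s-s : ℕ):ℝ) else 0)
          + 4*((ℓ-s-t : ℕ):ℝ) := by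
      intro t
      by_cases h : s = t
      · subst h; rw [if_pos rfl, if_pos rfl]; ring
      · rw [if_neg h, if_neg h]; ring
    rw [Finset.sum_congr rfl (fun t _ => pw t), Finset.sum_add_distrib,
      Finset.sum_ite_eq (Finset.Ico 1 ℓ) s
        (fun _ => 2*((ℓ-s:ℕ):ℝ)^2 - 2*((ℓ-s:ℕ):ℝ) - 4*((ℓ-s-s : ℕ):ℝ)),
      if_pos hs]
  -- cast bridges
  have castA : ∑ s ∈ Finset.Ico 1 ℓ, (2*((ℓ-s:ℕ):ℝ)^2 - 2*((ℓ-s:ℕ):ℝ))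
      = 2 * ((∑ s ∈ Finset.Ico 1 ℓ, ((ℓ-s)*(ℓ-s) - (ℓ-s)) : ℕ) : ℝ) := by
    rw [Nat.cast_sum, Finset.mul_sum]
    apply Finset.sum_congr rfl
    intro s _
    have hle : (ℓ-s) ≤ (ℓ-s)*(ℓ-s) := by
      rcases Nat.eq_zero_or_pos (ℓ-s) with h1 | h1
      · omega
      · exact Nat.le_mul_of_pos_left _ h1
    rw [Nat.cast_sub hle]
    push_cast
    ring
  have castB : ∑ s ∈ Finset.Ico 1 ℓ, ∑ t ∈ Finset.Ico 1 ℓ, 4*((ℓ-s-t : ℕ):ℝ)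
      = 4 * ((∑ s ∈ Finset.Ico 1 ℓ, ∑ t ∈ Finset.Ico 1 ℓ, (ℓ-s-t) : ℕ) : ℝ) := by
    rw [Nat.cast_sum, Finset.mul_sum]
    apply Finset.sum_congr rfl
    intro s _
    rw [Nat.cast_sum, Finset.mul_sum]
  have castC : ∑ s ∈ Finset.Ico 1 ℓ, 4*((ℓ-s-s : ℕ):ℝ)
      = 4 * ((∑ s ∈ Finset.Ico 1 ℓ, (ℓ-s-s) : ℕ) : ℝ) := by
    rw [Nat.cast_sum, Finset.mul_sum]
  have hNA : ((∑ s ∈ Finset.Ico 1 ℓ, ((ℓ-s)*(ℓ-s) - (ℓ-s)) : ℕ) : ℝ)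
      = ((ℓ:ℝ)^3 - 3*(ℓ:ℝ)^2 + 2*(ℓ:ℝ)) / 3 := by
    have := natA ℓ hℓ
    have hcast : (3:ℝ) * ((∑ s ∈ Finset.Ico 1 ℓ, ((ℓ-s)*(ℓ-s) - (ℓ-s)) : ℕ) : ℝ)
        = ((ℓ*(ℓ-1)*(ℓ-2) : ℕ) : ℝ) := by
      rw [← this]; push_cast; ring
    rw [cast_prod3 ℓ hℓ] at hcast
    linarith
  have hNB : ((∑ s ∈ Finset.Ico 1 ℓ, ∑ t ∈ Finset.Ico 1 ℓ, (ℓ-s-t) : ℕ) : ℝ)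
      = ((ℓ:ℝ)^3 - 3*(ℓ:ℝ)^2 + 2*(ℓ:ℝ)) / 6 := by
    have := natB ℓ hℓ
    have hcast : (6:ℝ) * ((∑ s ∈ Finset.Ico 1 ℓ, ∑ t ∈ Finset.Ico 1 ℓ, (ℓ-s-t) : ℕ) : ℝ)
        = ((ℓ*(ℓ-1)*(ℓ-2) : ℕ) : ℝ) := by
      rw [← this]; push_cast; ring
    rw [cast_prod3 ℓ hℓ] at hcast
    linarith
  have main : cmom 2 ℓ ssac
      = 8 * (((ℓ:ℝ)^3 - 3*(ℓ:ℝ)^2 + 2*(ℓ:ℝ)) / 3)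
        + 16 * (((ℓ:ℝ)^3 - 3*(ℓ:ℝ)^2 + 2*(ℓ:ℝ)) / 6)
        - 16 * ((∑ s ∈ Finset.Ico 1 ℓ, (ℓ-s-s) : ℕ) : ℝ) / 4 * 4
        + 16 * ((∑ s ∈ Finset.Ico 1 ℓ, (ℓ-s-s) : ℕ) : ℝ)
        - 16 * ((∑ s ∈ Finset.Ico 1 ℓ, (ℓ-s-s) : ℕ) : ℝ) := by
    rw [hVar, hWA, hsplit]
    have e2 : ∑ s ∈ Finset.Ico 1 ℓ, (2*((ℓ-s:ℕ):ℝ)^2 - 2*((ℓ-s:ℕ):ℝ) - 4*((ℓ-s-s : ℕ):ℝ))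
        = ∑ s ∈ Finset.Ico 1 ℓ, (2*((ℓ-s:ℕ):ℝ)^2 - 2*((ℓ-s:ℕ):ℝ))
          - ∑ s ∈ Finset.Ico 1 ℓ, 4*((ℓ-s-s : ℕ):ℝ) := by
      rw [← Finset.sum_sub_distrib]
    rw [e2, castA, castB, castC, hNA, hNB]
    ring
  constructor
  · intro he
    have hNC : ((∑ s ∈ Finset.Ico 1 ℓ, (ℓ-s-s) : ℕ) : ℝ) = ((ℓ:ℝ)^2 - 2*(ℓ:ℝ)) / 4 := by
      have := natC_even ℓ hℓ he
      have h2 : 2 ≤ ℓ := by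
        rcases he with ⟨r, hr⟩; omega
      have hcast : (4:ℝ) * ((∑ s ∈ Finset.Ico 1 ℓ, (ℓ-s-s) : ℕ) : ℝ)
          = ((ℓ*ℓ - 2*ℓ : ℕ) : ℝ) := by rw [← this]; push_cast; ring
      have hsub : ((ℓ*ℓ - 2*ℓ : ℕ) : ℝ) = (ℓ:ℝ)^2 - 2*(ℓ:ℝ) := by
        rw [Nat.cast_sub (by nlinarith)]; push_cast; ring
      rw [hsub] at hcast
      linarith
    rw [main, hNC]
    ring
  · intro ho
    have hNC : ((∑ s ∈ Finset.Ico 1 ℓ, (ℓ-s-s) : ℕ) : ℝ) = ((ℓ:ℝ) - 1)^2 / 4 := by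
      have := natC_odd ℓ hℓ ho
      have hcast : (4:ℝ) * ((∑ s ∈ Finset.Ico 1 ℓ, (ℓ-s-s) : ℕ) : ℝ)
          = (((ℓ-1)*(ℓ-1) : ℕ) : ℝ) := by rw [← this]; push_cast; ring
      have hsub : (((ℓ-1)*(ℓ-1) : ℕ) : ℝ) = ((ℓ:ℝ) - 1)^2 := by
        rw [Nat.cast_mul, Nat.cast_sub (by omega)]; push_cast; ring
      rw [hsub] at hcast
      linarith
    rw [main, hNC]
    ring

/-- The variance of `ssac` over binary sequences of length `ℓ`. -/
theorem variance_ssac (ℓ : ℕ) (hℓ : 0 < ℓ) :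
    (Even ℓ →
      cmom 2 ℓ ssac = (16 * (ℓ : ℝ) ^ 3 - 60 * (ℓ : ℝ) ^ 2 + 56 * (ℓ : ℝ)) / 3) ∧
    (Odd ℓ →
      cmom 2 ℓ ssac = (16 * (ℓ : ℝ) ^ 3 - 60 * (ℓ : ℝ) ^ 2 + 56 * (ℓ : ℝ) - 12) / 3) := by
  exact variance_ssac' ℓ hℓ
end

section
/- Let ℓ and p be positive integers. Then the p-th central moment of ADF(f), as f ranges uniformly over the 2^ℓ binary sequences of length ℓ, is nonnegative. Moreover, it is zero if and only if (i) p = 1, or (ii) p is odd with p > 1 and ℓ ≤ 3, or (iii) p is even and ℓ ≤ 2; in all other cases it is strictly positive. -/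
open scoped BigOperators

open scoped symmDiff

namespace ADFAux

open Finset

variable {ℓ : ℕ}

/-- the ±1 value of the sign pattern at `i` -/
noncomputable def x (σ : Fin ℓ → Bool) (i : Fin ℓ) : ℝ := if σ i then 1 else -1

lemma x_mul_self (σ : Fin ℓ → Bool) (i : Fin ℓ) : x σ i * x σ i = 1 := by
  unfold x; cases σ i <;> norm_num

lemma x_sq (σ : Fin ℓ → Bool) (i : Fin ℓ) : x σ i ^ 2 = 1 := by
  rw [sq]; exact x_mul_self σ i

/-- the character attached to a subset `S` -/
noncomputable def chi (S : Finset (Fin ℓ)) (σ : Fin ℓ → Bool) : ℝ := ∏ i ∈ S, x σ i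

lemma chi_empty (σ : Fin ℓ → Bool) : chi ∅ σ = 1 := by simp [chi]

lemma chi_mul_self (S : Finset (Fin ℓ)) (σ : Fin ℓ → Bool) : chi S σ * chi S σ = 1 := by
  unfold chi
  rw [← Finset.prod_mul_distrib]
  exact Finset.prod_eq_one fun i _ => x_mul_self σ i

lemma chi_sq (S : Finset (Fin ℓ)) (σ : Fin ℓ → Bool) : chi S σ ^ 2 = 1 := by
  rw [sq]; exact chi_mul_self S σ

lemma chi_pow_even (S : Finset (Fin ℓ)) (σ : Fin ℓ → Bool) {n : ℕ} (hn : Even n) :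
    chi S σ ^ n = 1 := by
  obtain ⟨m, rfl⟩ := hn
  rw [← two_mul, pow_mul, chi_sq, one_pow]

lemma chi_pow_odd (S : Finset (Fin ℓ)) (σ : Fin ℓ → Bool) {n : ℕ} (hn : Odd n) :
    chi S σ ^ n = chi S σ := by
  obtain ⟨m, rfl⟩ := hn
  rw [pow_add, pow_mul, chi_sq, one_pow, pow_one, one_mul]

lemma chi_mul (A B : Finset (Fin ℓ)) (σ : Fin ℓ → Bool) :
    chi A σ * chi B σ = chi (A ∆ B) σ := by
  classical
  unfold chi
  have pA : ∏ i ∈ A, x σ i = (∏ i ∈ A \ B, x σ i) * ∏ i ∈ A ∩ B, x σ i := by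
    rw [← Finset.prod_union (Finset.disjoint_sdiff_inter A B), Finset.sdiff_union_inter]
  have pB : ∏ i ∈ B, x σ i = (∏ i ∈ B \ A, x σ i) * ∏ i ∈ A ∩ B, x σ i := by
    rw [Finset.inter_comm A B, ← Finset.prod_union (Finset.disjoint_sdiff_inter B A),
      Finset.sdiff_union_inter]
  have hsymm : A ∆ B = (A \ B) ∪ (B \ A) := by
    rw [symmDiff_def]; rfl
  rw [pA, pB, hsymm, Finset.prod_union disjoint_sdiff_sdiff]
  have : (∏ i ∈ A ∩ B, x σ i) * ∏ i ∈ A ∩ B, x σ i = 1 := chi_mul_self (A ∩ B) σ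
  calc ((∏ i ∈ A \ B, x σ i) * ∏ i ∈ A ∩ B, x σ i) *
      ((∏ i ∈ B \ A, x σ i) * ∏ i ∈ A ∩ B, x σ i)
      = ((∏ i ∈ A \ B, x σ i) * ∏ i ∈ B \ A, x σ i) *
        ((∏ i ∈ A ∩ B, x σ i) * ∏ i ∈ A ∩ B, x σ i) := by ring
    _ = (∏ i ∈ A \ B, x σ i) * ∏ i ∈ B \ A, x σ i := by rw [this, mul_one]

lemma sum_chi (S : Finset (Fin ℓ)) :
    ∑ σ : Fin ℓ → Bool, chi S σ = if S = ∅ then (2 : ℝ) ^ ℓ else 0 := by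
  classical
  have h1 : ∀ σ : Fin ℓ → Bool, chi S σ = ∏ i : Fin ℓ, (if i ∈ S then x σ i else 1) := by
    intro σ
    rw [chi, Finset.prod_ite_mem, Finset.univ_inter]
  have h2 : ∀ (σ : Fin ℓ → Bool) (i : Fin ℓ),
      (if i ∈ S then x σ i else 1) = (if i ∈ S then (if σ i then (1:ℝ) else -1) else 1) := by
    intro σ i; rfl
  have key : ∑ σ ∈ Fintype.piFinset (fun _ : Fin ℓ => (Finset.univ : Finset Bool)),
      ∏ i : Fin ℓ, (if i ∈ S then (if σ i then (1:ℝ) else -1) else 1)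
      = ∏ i : Fin ℓ, ∑ b : Bool, (if i ∈ S then (if b then (1:ℝ) else -1) else 1) :=
    (Finset.prod_univ_sum (fun _ : Fin ℓ => (Finset.univ : Finset Bool))
      (fun i b => if i ∈ S then (if b then (1:ℝ) else -1) else 1)).symm
  rw [Fintype.piFinset_univ] at key
  calc ∑ σ : Fin ℓ → Bool, chi S σ
      = ∑ σ : Fin ℓ → Bool,
          ∏ i : Fin ℓ, (if i ∈ S then (if σ i then (1:ℝ) else -1) else 1) :=
        Finset.sum_congr rfl fun σ _ => by rw [h1 σ]; rfl
    _ = ∏ i : Fin ℓ, ∑ b : Bool, (if i ∈ S then (if b then (1:ℝ) else -1) else 1) := key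
    _ = ∏ i : Fin ℓ, (if i ∈ S then (0:ℝ) else 2) := by
        refine Finset.prod_congr rfl fun i _ => ?_
        by_cases h : i ∈ S <;> simp [h]
    _ = if S = ∅ then (2 : ℝ) ^ ℓ else 0 := by
        by_cases h : S = ∅
        · simp [h, Finset.card_univ]
        · obtain ⟨i, hi⟩ := Finset.nonempty_iff_ne_empty.2 h
          rw [if_neg h]
          exact Finset.prod_eq_zero (Finset.mem_univ i) (by simp [hi])

lemma prod_chi_exists {κ : Type*} [DecidableEq κ] (K : Finset κ) (T : κ → Finset (Fin ℓ)) :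
    ∃ U : Finset (Fin ℓ), ∀ σ, ∏ k ∈ K, chi (T k) σ = chi U σ := by
  classical
  induction K using Finset.induction_on with
  | empty => exact ⟨∅, fun σ => by simp [chi_empty]⟩
  | insert a K' hx ih =>
    obtain ⟨U, hU⟩ := ih
    exact ⟨T a ∆ U, fun σ => by rw [Finset.prod_insert hx, hU σ, chi_mul]⟩

lemma sum_prod_chi_nonneg {κ : Type*} [DecidableEq κ] (K : Finset κ) (T : κ → Finset (Fin ℓ)) :
    0 ≤ ∑ σ : Fin ℓ → Bool, ∏ k ∈ K, chi (T k) σ := by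
  obtain ⟨U, hU⟩ := prod_chi_exists K T
  rw [Finset.sum_congr rfl fun σ _ => hU σ, sum_chi]
  split <;> positivity

end ADFAux

namespace ADFAux
open Finset
variable {ℓ : ℕ}

lemma seq_eq_zero (σ : Fin ℓ → Bool) {j : ℤ} (h : ¬(0 ≤ j ∧ j < (ℓ:ℤ))) : seq ℓ σ j = 0 := by
  unfold seq; rw [dif_neg h]

lemma seq_eq_x (σ : Fin ℓ → Bool) {j : ℤ} (h : 0 ≤ j ∧ j < (ℓ:ℤ)) :
    seq ℓ σ j = x σ ⟨j.toNat, by omega⟩ := by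
  unfold seq x; rw [dif_pos h]

lemma autocorr_seq (σ : Fin ℓ → Bool) (s : ℤ) :
    autocorr (seq ℓ σ) s = ∑ j ∈ Finset.Icc (0:ℤ) ((ℓ:ℤ)-1), seq ℓ σ (j + s) * seq ℓ σ j := by
  unfold autocorr
  apply finsum_eq_sum_of_support_subset
  intro j hj
  simp only [Function.mem_support] at hj
  by_contra hmem
  simp only [Finset.coe_Icc, Set.mem_Icc, not_and_or, not_le] at hmem
  apply hj
  have : seq ℓ σ j = 0 := seq_eq_zero σ (by omega)
  rw [this, mul_zero]

lemma autocorr_seq_zero (σ : Fin ℓ → Bool) {s : ℤ} (h : ¬(1-(ℓ:ℤ) ≤ s ∧ s ≤ (ℓ:ℤ)-1)) :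
    autocorr (seq ℓ σ) s = 0 := by
  rw [autocorr_seq]
  apply Finset.sum_eq_zero
  intro j hj
  rw [Finset.mem_Icc] at hj
  rcases not_and_or.1 h with h' | h'
  · rw [seq_eq_zero σ (j := j + s) (by omega), zero_mul]
  · rw [seq_eq_zero σ (j := j + s) (by omega), zero_mul]

lemma ssac_seq (σ : Fin ℓ → Bool) :
    ssac (seq ℓ σ) = ∑ s ∈ Finset.Icc (1-(ℓ:ℤ)) ((ℓ:ℤ)-1), autocorr (seq ℓ σ) s ^ 2 := by
  unfold ssac
  apply finsum_eq_sum_of_support_subset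
  intro s hs
  simp only [Function.mem_support] at hs
  by_contra hmem
  simp only [Finset.coe_Icc, Set.mem_Icc] at hmem
  exact hs (by rw [autocorr_seq_zero σ hmem]; norm_num)

end ADFAux

namespace ADFAux
open Finset
variable {ℓ : ℕ}

/-- singleton finset for in-range indices -/
def msing (ℓ : ℕ) (z : ℤ) : Finset (Fin ℓ) :=
  if h : 0 ≤ z ∧ z < (ℓ:ℤ) then {⟨z.toNat, by omega⟩} else ∅

lemma msing_of {z : ℤ} (h : 0 ≤ z ∧ z < (ℓ:ℤ)) :
    msing ℓ z = {(⟨z.toNat, by omega⟩ : Fin ℓ)} := dif_pos h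

lemma chi_msing (σ : Fin ℓ → Bool) {z : ℤ} (h : 0 ≤ z ∧ z < (ℓ:ℤ)) :
    chi (msing ℓ z) σ = seq ℓ σ z := by
  rw [msing_of h, chi, Finset.prod_singleton, seq_eq_x σ h]

def tok (ℓ : ℕ) (t : ℤ × ℤ × ℤ) : Prop :=
  (0 ≤ t.2.1 ∧ t.2.1 < (ℓ:ℤ)) ∧ (0 ≤ t.2.1 + t.1 ∧ t.2.1 + t.1 < (ℓ:ℤ)) ∧
  (0 ≤ t.2.2 ∧ t.2.2 < (ℓ:ℤ)) ∧ (0 ≤ t.2.2 + t.1 ∧ t.2.2 + t.1 < (ℓ:ℤ))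

instance : DecidablePred (tok ℓ) := fun t => by unfold tok; infer_instance

def St (ℓ : ℕ) (t : ℤ × ℤ × ℤ) : Finset (Fin ℓ) :=
  (msing ℓ (t.2.1 + t.1) ∆ msing ℓ t.2.1) ∆ (msing ℓ (t.2.2 + t.1) ∆ msing ℓ t.2.2)

noncomputable def Ff (ℓ : ℕ) : Finset (ℤ × ℤ × ℤ) :=
  Finset.Icc (1-(ℓ:ℤ)) ((ℓ:ℤ)-1) ×ˢ (Finset.Icc 0 ((ℓ:ℤ)-1) ×ˢ Finset.Icc 0 ((ℓ:ℤ)-1))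

noncomputable def F1 (ℓ : ℕ) : Finset (ℤ × ℤ × ℤ) := (Ff ℓ).filter (tok ℓ)

noncomputable def F2 (ℓ : ℕ) : Finset (ℤ × ℤ × ℤ) := (F1 ℓ).filter (fun t => St ℓ t ≠ ∅)

/-- the summand of the expanded `ssac` -/
noncomputable def trm (ℓ : ℕ) (σ : Fin ℓ → Bool) (t : ℤ × ℤ × ℤ) : ℝ :=
  (seq ℓ σ (t.2.1 + t.1) * seq ℓ σ t.2.1) * (seq ℓ σ (t.2.2 + t.1) * seq ℓ σ t.2.2)

lemma trm_eq_chi (σ : Fin ℓ → Bool) {t : ℤ × ℤ × ℤ} (h : tok ℓ t) :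
    trm ℓ σ t = chi (St ℓ t) σ := by
  obtain ⟨h1, h2, h3, h4⟩ := h
  rw [trm, St, ← chi_msing σ h1, ← chi_msing σ h2, ← chi_msing σ h3, ← chi_msing σ h4,
    chi_mul, chi_mul, chi_mul]

lemma trm_eq_zero (σ : Fin ℓ → Bool) {t : ℤ × ℤ × ℤ} (h : ¬ tok ℓ t) :
    trm ℓ σ t = 0 := by
  unfold tok at h
  unfold trm
  by_cases h1 : 0 ≤ t.2.1 ∧ t.2.1 < (ℓ:ℤ)
  · by_cases h2 : 0 ≤ t.2.1 + t.1 ∧ t.2.1 + t.1 < (ℓ:ℤ)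
    · by_cases h3 : 0 ≤ t.2.2 ∧ t.2.2 < (ℓ:ℤ)
      · by_cases h4 : 0 ≤ t.2.2 + t.1 ∧ t.2.2 + t.1 < (ℓ:ℤ)
        · exact absurd ⟨h1, h2, h3, h4⟩ h
        · rw [seq_eq_zero σ h4]; ring
      · rw [seq_eq_zero σ h3]; ring
    · rw [seq_eq_zero σ h2]; ring
  · rw [seq_eq_zero σ h1]; ring

lemma ssac_eq_sum_chi (σ : Fin ℓ → Bool) :
    ssac (seq ℓ σ) = ∑ t ∈ F1 ℓ, chi (St ℓ t) σ := by
  have step1 : ssac (seq ℓ σ) = ∑ t ∈ Ff ℓ, trm ℓ σ t := by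
    rw [ssac_seq, Ff, Finset.sum_product]
    refine Finset.sum_congr rfl fun s _ => ?_
    rw [autocorr_seq, sq, Finset.sum_mul_sum, Finset.sum_product]
    refine Finset.sum_congr rfl fun j _ => Finset.sum_congr rfl fun k _ => ?_
    rfl
  rw [step1, F1, ← Finset.sum_filter_of_ne (fun t _ hne => by
    by_contra hok; exact hne (trm_eq_zero σ hok))]
  exact Finset.sum_congr rfl fun t ht => trm_eq_chi σ (Finset.mem_filter.1 ht).2

end ADFAux

namespace ADFAux
open Finset
variable {ℓ : ℕ}

/-- number of "diagonal" terms, which equals the expected value of `ssac` -/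
noncomputable def N0 (ℓ : ℕ) : ℕ := ((F1 ℓ).filter (fun t => St ℓ t = ∅)).card

lemma sum_ssac (ℓ : ℕ) :
    ∑ σ : Fin ℓ → Bool, ssac (seq ℓ σ) = 2 ^ ℓ * (N0 ℓ : ℝ) := by
  classical
  rw [Finset.sum_congr rfl fun σ _ => ssac_eq_sum_chi σ, Finset.sum_comm]
  rw [Finset.sum_congr rfl fun t _ => sum_chi (St ℓ t)]
  rw [Finset.sum_ite, Finset.sum_const, Finset.sum_const, smul_zero, add_zero, N0]
  rw [nsmul_eq_mul, mul_comm]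

lemma ssac_sub_N0 (σ : Fin ℓ → Bool) :
    ssac (seq ℓ σ) - (N0 ℓ : ℝ) = ∑ t ∈ F2 ℓ, chi (St ℓ t) σ := by
  classical
  rw [ssac_eq_sum_chi σ,
    ← Finset.sum_filter_add_sum_filter_not (F1 ℓ) (fun t => St ℓ t = ∅) (fun t => chi (St ℓ t) σ)]
  have h1 : ∑ t ∈ (F1 ℓ).filter (fun t => St ℓ t = ∅), chi (St ℓ t) σ = (N0 ℓ : ℝ) := by
    rw [Finset.sum_congr rfl fun t ht => by
      rw [(Finset.mem_filter.1 ht).2, chi_empty], Finset.sum_const, nsmul_eq_mul, mul_one, N0]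
  rw [h1, F2]
  ring

/-- the main nonnegative quantity -/
noncomputable def Mval (p ℓ : ℕ) : ℝ :=
  ∑ u ∈ Fintype.piFinset (fun _ : Fin p => F2 ℓ),
    ∑ σ : Fin ℓ → Bool, ∏ k : Fin p, chi (St ℓ (u k)) σ

lemma sum_pow_eq (p ℓ : ℕ) :
    ∑ σ : Fin ℓ → Bool, (ssac (seq ℓ σ) - (N0 ℓ : ℝ)) ^ p = Mval p ℓ := by
  classical
  rw [Mval, Finset.sum_comm]
  refine Finset.sum_congr rfl fun σ _ => ?_
  rw [ssac_sub_N0 σ, Finset.sum_pow']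

lemma Mval_nonneg (p ℓ : ℕ) : 0 ≤ Mval p ℓ := by
  classical
  exact Finset.sum_nonneg fun u _ => sum_prod_chi_nonneg Finset.univ (fun k => St ℓ (u k))

lemma cmom_ADF_eq (p ℓ : ℕ) (hℓ : 0 < ℓ) :
    cmom p ℓ (ADF ℓ) = (((ℓ:ℝ) ^ 2)⁻¹) ^ p * (Mval p ℓ / 2 ^ ℓ) := by
  classical
  have hl2 : ((ℓ:ℝ) ^ 2) ≠ 0 := by positivity
  have hE : _root_.expect ℓ (ADF ℓ) = -1 + (N0 ℓ : ℝ) / (ℓ:ℝ) ^ 2 := by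
    unfold _root_.expect ADF
    rw [Finset.sum_add_distrib, Finset.sum_const, Finset.card_univ, Fintype.card_fun,
      Fintype.card_fin, Fintype.card_bool, ← Finset.sum_div, sum_ssac]
    field_simp
    ring
  calc cmom p ℓ (ADF ℓ)
      = (∑ σ : Fin ℓ → Bool, (ADF ℓ (seq ℓ σ) - _root_.expect ℓ (ADF ℓ)) ^ p) / 2 ^ ℓ := rfl
    _ = (∑ σ : Fin ℓ → Bool, ((ℓ:ℝ)^2)⁻¹ ^ p * (ssac (seq ℓ σ) - (N0 ℓ : ℝ)) ^ p) / 2 ^ ℓ := by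
        rw [hE]
        refine congrArg (· / 2^ℓ) (Finset.sum_congr rfl fun σ _ => ?_)
        rw [← mul_pow]
        congr 1
        unfold ADF
        field_simp
        try ring
    _ = ((ℓ:ℝ)^2)⁻¹ ^ p * (Mval p ℓ / 2 ^ ℓ) := by
        rw [← Finset.mul_sum, sum_pow_eq, mul_div_assoc]

end ADFAux

namespace ADFAux
open Finset
variable {ℓ : ℕ}

lemma mem_msing {z : ℤ} {a : Fin ℓ} :
    a ∈ msing ℓ z ↔ 0 ≤ z ∧ z < (ℓ:ℤ) ∧ ((a:ℕ) : ℤ) = z := by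
  unfold msing
  split
  · rename_i h
    simp only [Finset.mem_singleton, Fin.ext_iff, Fin.val_mk]
    omega
  · rename_i h
    simp only [Finset.notMem_empty, false_iff]
    omega

end ADFAux

namespace ADFAux
open Finset
variable {ℓ : ℕ}

lemma tok_mk {s j k : ℤ} : tok ℓ (s, j, k) ↔
    ((0 ≤ j ∧ j < (ℓ:ℤ)) ∧ (0 ≤ j + s ∧ j + s < (ℓ:ℤ)) ∧
     (0 ≤ k ∧ k < (ℓ:ℤ)) ∧ (0 ≤ k + s ∧ k + s < (ℓ:ℤ))) := Iff.rfl

lemma St_mk (s j k : ℤ) : St ℓ (s, j, k) =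
    (msing ℓ (j + s) ∆ msing ℓ j) ∆ (msing ℓ (k + s) ∆ msing ℓ k) := rfl

lemma mem_F2 {s j k : ℤ} (hs : 1 - (ℓ:ℤ) ≤ s ∧ s ≤ (ℓ:ℤ) - 1)
    (hj : 0 ≤ j ∧ j ≤ (ℓ:ℤ) - 1) (hk : 0 ≤ k ∧ k ≤ (ℓ:ℤ) - 1)
    (hok : tok ℓ (s, j, k)) (hne : St ℓ (s, j, k) ≠ ∅) : (s, j, k) ∈ F2 ℓ := by
  rw [F2, Finset.mem_filter, F1, Finset.mem_filter, Ff, Finset.mem_product,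
    Finset.mem_product, Finset.mem_Icc, Finset.mem_Icc, Finset.mem_Icc]
  exact ⟨⟨⟨hs, hj, hk⟩, hok⟩, hne⟩

lemma t1_mem (h : 3 ≤ ℓ) : ((1:ℤ), (0:ℤ), (1:ℤ)) ∈ F2 ℓ := by
  have hℓ : (3:ℤ) ≤ (ℓ:ℤ) := by exact_mod_cast h
  have h0 : 0 < ℓ := by omega
  refine mem_F2 (by omega) (by omega) (by omega) (tok_mk.2 (by omega)) ?_
  refine Finset.ne_empty_of_mem (a := (⟨0, h0⟩ : Fin ℓ)) ?_
  have hv : (((⟨0, h0⟩ : Fin ℓ) : ℕ) : ℤ) = 0 := by simp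
  rw [St_mk]
  simp only [Finset.mem_symmDiff, mem_msing]
  omega

lemma t2_mem (h : 4 ≤ ℓ) : ((1:ℤ), (1:ℤ), (2:ℤ)) ∈ F2 ℓ := by
  have hℓ : (4:ℤ) ≤ (ℓ:ℤ) := by exact_mod_cast h
  have h0 : 1 < ℓ := by omega
  refine mem_F2 (by omega) (by omega) (by omega) (tok_mk.2 (by omega)) ?_
  refine Finset.ne_empty_of_mem (a := (⟨1, h0⟩ : Fin ℓ)) ?_
  have hv : (((⟨1, h0⟩ : Fin ℓ) : ℕ) : ℤ) = 1 := by simp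
  rw [St_mk]
  simp only [Finset.mem_symmDiff, mem_msing]
  omega

lemma t3_mem (h : 4 ≤ ℓ) : ((2:ℤ), (0:ℤ), (1:ℤ)) ∈ F2 ℓ := by
  have hℓ : (4:ℤ) ≤ (ℓ:ℤ) := by exact_mod_cast h
  have h0 : 0 < ℓ := by omega
  refine mem_F2 (by omega) (by omega) (by omega) (tok_mk.2 (by omega)) ?_
  refine Finset.ne_empty_of_mem (a := (⟨0, h0⟩ : Fin ℓ)) ?_
  have hv : (((⟨0, h0⟩ : Fin ℓ) : ℕ) : ℤ) = 0 := by simp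
  rw [St_mk]
  simp only [Finset.mem_symmDiff, mem_msing]
  omega

lemma St_symmDiff (h : 4 ≤ ℓ) :
    St ℓ ((1:ℤ), (0:ℤ), (1:ℤ)) ∆ St ℓ ((1:ℤ), (1:ℤ), (2:ℤ)) = St ℓ ((2:ℤ), (0:ℤ), (1:ℤ)) := by
  have hℓ : (4:ℤ) ≤ (ℓ:ℤ) := by exact_mod_cast h
  ext a
  rw [St_mk, St_mk, St_mk]
  simp only [Finset.mem_symmDiff, mem_msing]
  omega

lemma chi_triple (h : 4 ≤ ℓ) (σ : Fin ℓ → Bool) :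
    chi (St ℓ ((1:ℤ), (1:ℤ), (2:ℤ))) σ *
      (chi (St ℓ ((2:ℤ), (0:ℤ), (1:ℤ))) σ * chi (St ℓ ((1:ℤ), (0:ℤ), (1:ℤ))) σ) = 1 := by
  have : chi (St ℓ ((1:ℤ), (0:ℤ), (1:ℤ))) σ * chi (St ℓ ((1:ℤ), (1:ℤ), (2:ℤ))) σ
      = chi (St ℓ ((2:ℤ), (0:ℤ), (1:ℤ))) σ := by
    rw [chi_mul, St_symmDiff h]
  calc chi (St ℓ ((1:ℤ), (1:ℤ), (2:ℤ))) σ *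
      (chi (St ℓ ((2:ℤ), (0:ℤ), (1:ℤ))) σ * chi (St ℓ ((1:ℤ), (0:ℤ), (1:ℤ))) σ)
      = (chi (St ℓ ((1:ℤ), (0:ℤ), (1:ℤ))) σ * chi (St ℓ ((1:ℤ), (1:ℤ), (2:ℤ))) σ) *
        chi (St ℓ ((2:ℤ), (0:ℤ), (1:ℤ))) σ := by ring
    _ = 1 := by rw [this, chi_mul_self]

end ADFAux

namespace ADFAux
open Finset
variable {ℓ : ℕ}

lemma Mval_one (ℓ : ℕ) : Mval 1 ℓ = 0 := by
  rw [← sum_pow_eq 1 ℓ]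
  simp only [pow_one]
  rw [Finset.sum_sub_distrib, sum_ssac, Finset.sum_const, Finset.card_univ, Fintype.card_fun,
    Fintype.card_fin, Fintype.card_bool, nsmul_eq_mul]
  push_cast
  ring

lemma Mval_eq_zero_of_empty {p ℓ : ℕ} (hp : 0 < p) (h : F2 ℓ = ∅) : Mval p ℓ = 0 := by
  rw [← sum_pow_eq]
  refine Finset.sum_eq_zero fun σ _ => ?_
  rw [ssac_sub_N0, h, Finset.sum_empty, zero_pow hp.ne']

lemma F2_one : F2 1 = ∅ := by decide
lemma F2_two : F2 2 = ∅ := by decide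
lemma F2_three : ∀ t ∈ F2 3, St 3 t = ({0, 2} : Finset (Fin 3)) := by decide

lemma Mval_three_odd {p : ℕ} (hp : Odd p) : Mval p 3 = 0 := by
  rw [Mval]
  refine Finset.sum_eq_zero fun u hu => ?_
  rw [Fintype.mem_piFinset] at hu
  have key : ∀ σ : Fin 3 → Bool,
      ∏ k : Fin p, chi (St 3 (u k)) σ = chi ({0, 2} : Finset (Fin 3)) σ := by
    intro σ
    rw [Finset.prod_congr rfl fun k _ => by rw [F2_three (u k) (hu k)],
      Finset.prod_const, Finset.card_univ, Fintype.card_fin, chi_pow_odd _ _ hp]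
  rw [Finset.sum_congr rfl fun σ _ => key σ, sum_chi, if_neg (by decide)]

lemma Mval_pos_even {p ℓ : ℕ} (hp : Even p) (h : 3 ≤ ℓ) : 0 < Mval p ℓ := by
  classical
  rw [Mval]
  refine Finset.sum_pos' (fun u _ => sum_prod_chi_nonneg Finset.univ fun k => St ℓ (u k)) ?_
  refine ⟨fun _ => ((1:ℤ), (0:ℤ), (1:ℤ)), Fintype.mem_piFinset.2 fun _ => t1_mem h, ?_⟩
  have key : ∀ σ : Fin ℓ → Bool,
      ∏ k : Fin p, chi (St ℓ ((1:ℤ), (0:ℤ), (1:ℤ))) σ = 1 := by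
    intro σ
    rw [Finset.prod_const, Finset.card_univ, Fintype.card_fin, chi_pow_even _ _ hp]
  rw [Finset.sum_congr rfl fun σ _ => key σ, Finset.sum_const, Finset.card_univ,
    Fintype.card_fun, Fintype.card_fin, Fintype.card_bool, nsmul_eq_mul, mul_one]
  positivity

lemma Mval_pos_odd {p ℓ : ℕ} (hp : Odd p) (hp3 : 3 ≤ p) (h : 4 ≤ ℓ) : 0 < Mval p ℓ := by
  classical
  have hp0 : 0 < p := by omega
  set a : Fin p := ⟨0, by omega⟩ with ha
  set b : Fin p := ⟨1, by omega⟩ with hb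
  have hab : b ≠ a := by simp [ha, hb, Fin.ext_iff]
  set u : Fin p → ℤ × ℤ × ℤ := fun k =>
    if k = a then ((1:ℤ), (1:ℤ), (2:ℤ)) else if k = b then ((2:ℤ), (0:ℤ), (1:ℤ))
    else ((1:ℤ), (0:ℤ), (1:ℤ)) with hu
  have hua : u a = ((1:ℤ), (1:ℤ), (2:ℤ)) := by simp [hu]
  have hub : u b = ((2:ℤ), (0:ℤ), (1:ℤ)) := by simp [hu, hab]
  rw [Mval]
  refine Finset.sum_pos' (fun u _ => sum_prod_chi_nonneg Finset.univ fun k => St ℓ (u k)) ?_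
  refine ⟨u, Fintype.mem_piFinset.2 fun k => ?_, ?_⟩
  · by_cases h1 : k = a
    · simpa [hu, h1] using t2_mem h
    · by_cases h2 : k = b
      · simpa [hu, h1, h2, hab] using t3_mem h
      · simpa [hu, h1, h2] using t1_mem (by omega)
  · have key : ∀ σ : Fin ℓ → Bool, ∏ k : Fin p, chi (St ℓ (u k)) σ = 1 := by
      intro σ
      have hmema : a ∈ (Finset.univ : Finset (Fin p)) := Finset.mem_univ a
      have hmemb : b ∈ Finset.univ.erase a := Finset.mem_erase.2 ⟨hab, Finset.mem_univ b⟩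
      rw [← Finset.mul_prod_erase Finset.univ _ hmema, ← Finset.mul_prod_erase _ _ hmemb]
      have hrest : ∀ k ∈ (Finset.univ.erase a).erase b,
          chi (St ℓ (u k)) σ = chi (St ℓ ((1:ℤ), (0:ℤ), (1:ℤ))) σ := by
        intro k hk
        rw [Finset.mem_erase, Finset.mem_erase] at hk
        rw [hu]
        simp only [if_neg hk.2.1, if_neg hk.1]
      rw [Finset.prod_congr rfl hrest, Finset.prod_const]
      have hcard : ((Finset.univ.erase a).erase b).card = p - 2 := by
        rw [Finset.card_erase_of_mem hmemb, Finset.card_erase_of_mem hmema,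
          Finset.card_univ, Fintype.card_fin]
        omega
      have hodd : Odd (p - 2) := by
        obtain ⟨m, hm⟩ := hp
        exact ⟨m - 1, by omega⟩
      rw [hcard, chi_pow_odd _ _ hodd, hua, hub]
      exact chi_triple h σ
    rw [Finset.sum_congr rfl fun σ _ => key σ, Finset.sum_const, Finset.card_univ,
      Fintype.card_fun, Fintype.card_fin, Fintype.card_bool, nsmul_eq_mul, mul_one]
    positivity

end ADFAux


/-- Positivity of the central moments of the demerit factor: the `p`-th central
moment is nonnegative, and it is zero exactly when `p = 1`, or `p` is odd with
`p > 1` and `ℓ ≤ 3`, or `p` is even and `ℓ ≤ 2`. -/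
theorem central_moment_ADF_nonneg_and_pos (ℓ p : ℕ) (hℓ : 0 < ℓ) (hp : 0 < p) :
    0 ≤ cmom p ℓ (ADF ℓ) ∧
    (cmom p ℓ (ADF ℓ) = 0 ↔
      p = 1 ∨ (Odd p ∧ 1 < p ∧ ℓ ≤ 3) ∨ (Even p ∧ ℓ ≤ 2)) := by
  classical
  have heq := ADFAux.cmom_ADF_eq p ℓ hℓ
  have hl0 : (0:ℝ) < (ℓ:ℝ) := by exact_mod_cast hℓ
  have hc : 0 < (((ℓ:ℝ) ^ 2)⁻¹) ^ p := by positivity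
  have h2 : (0:ℝ) < 2 ^ ℓ := by positivity
  have hiff : cmom p ℓ (ADF ℓ) = 0 ↔ ADFAux.Mval p ℓ = 0 := by
    rw [heq]
    constructor
    · intro h0
      rcases mul_eq_zero.1 h0 with h' | h'
      · exact absurd h' hc.ne'
      · exact (div_eq_zero_iff.1 h').resolve_right h2.ne'
    · intro h0
      rw [h0]
      simp
  constructor
  · rw [heq]
    exact mul_nonneg hc.le (div_nonneg (ADFAux.Mval_nonneg p ℓ) h2.le)
  rw [hiff]
  constructor
  · intro h0
    by_contra hcon
    push_neg at hcon
    obtain ⟨h1, hodd', heven'⟩ := hcon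
    rcases Nat.even_or_odd p with he | ho
    · have hl3 : 3 ≤ ℓ := by have := heven' he; omega
      exact absurd h0 (ADFAux.Mval_pos_even he hl3).ne'
    · have hps : 3 ≤ p := by rcases ho with ⟨m, hm⟩; omega
      have hl4 : 4 ≤ ℓ := by have := hodd' ho (by omega); omega
      exact absurd h0 (ADFAux.Mval_pos_odd ho hps hl4).ne'
  · rintro (rfl | ⟨ho, hp1, hl3⟩ | ⟨he, hl2⟩)
    · exact ADFAux.Mval_one ℓ
    · interval_cases ℓ
      · exact ADFAux.Mval_eq_zero_of_empty hp ADFAux.F2_one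
      · exact ADFAux.Mval_eq_zero_of_empty hp ADFAux.F2_two
      · exact ADFAux.Mval_three_odd ho
    · interval_cases ℓ
      · exact ADFAux.Mval_eq_zero_of_empty hp ADFAux.F2_one
      · exact ADFAux.Mval_eq_zero_of_empty hp ADFAux.F2_two
end
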